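/- arXiv:1401.2790 — 8 statements merged into one kernel-verified Lean document; each statement's English description precedes it below -/
import Mathlib

section
/- Let G be a finitely generated group, let N₁ and N₂ be normal subgroups of G that commute elementwise (every element of N₁ commutes with every element of N₂), let Γ₁ = G/N₁, Γ₂ = G/N₂, and Q = G/(N₁N₂), and let S be a nonabelian finite simple group. Then the (finite) cardinalities satisfy |Epi(G,S)| + |Epi(Q,S)| = |Epi(Γ₁,S)| + |Epi(Γ₂,S)|. -/
section aux

variable {G S : Type*} [Group G] [Group S]

private lemma finite_homs [Group.FG G] [Finite S] : Finite (G →* S) := by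
  obtain ⟨T, hT⟩ := (Group.fg_def.mp ‹Group.FG G›)
  have : Function.Injective (fun f : G →* S => fun t : T => f t) := by
    intro f g h
    refine MonoidHom.eq_of_eqOn_dense hT ?_
    intro x hx
    exact congrFun h ⟨x, hx⟩
  exact Finite.of_injective _ this

/-- Surjections from `G ⧸ N` correspond to surjections from `G` killing `N`. -/
private def epiEquiv (N : Subgroup G) [N.Normal] :
    {f : G ⧸ N →* S // Function.Surjective f} ≃
      {f : G →* S // Function.Surjective f ∧ N ≤ f.ker} where
  toFun f := ⟨f.1.comp (QuotientGroup.mk' N),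
    ⟨f.2.comp (QuotientGroup.mk'_surjective N), fun n hn => by
      simp [MonoidHom.mem_ker, (QuotientGroup.eq_one_iff n).mpr hn]⟩⟩
  invFun f := ⟨QuotientGroup.lift N f.1 f.2.2, by
    intro s
    obtain ⟨g, hg⟩ := f.2.1 s
    exact ⟨QuotientGroup.mk g, hg⟩⟩
  left_inv f := by
    ext x
    rfl
  right_inv f := by ext x; rfl

end aux

/-- Let `G` be a finitely generated group, `N₁ N₂` normal subgroups of `G`
that commute elementwise, `Γ₁ = G/N₁`, `Γ₂ = G/N₂`, `Q = G/(N₁N₂)`, and `S` a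
nonabelian finite simple group. Then `|Epi(G,S)| + |Epi(Q,S)| = |Epi(Γ₁,S)| + |Epi(Γ₂,S)|`. -/
theorem stmt_0 {G : Type*} [Group G] [Group.FG G]
    (N₁ N₂ : Subgroup G) [N₁.Normal] [N₂.Normal]
    (hcomm : ∀ a ∈ N₁, ∀ b ∈ N₂, a * b = b * a)
    (S : Type*) [Group S] [Finite S] [IsSimpleGroup S]
    (hS : ¬ ∀ a b : S, a * b = b * a) :
    Nat.card {f : G →* S // Function.Surjective f}
        + Nat.card {f : G ⧸ (N₁ ⊔ N₂) →* S // Function.Surjective f}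
      = Nat.card {f : G ⧸ N₁ →* S // Function.Surjective f}
        + Nat.card {f : G ⧸ N₂ →* S // Function.Surjective f} := by
  have hfin : Finite (G →* S) := finite_homs
  -- key claim: every surjection kills N₁ or N₂
  have key : ∀ f : G →* S, Function.Surjective f → N₁ ≤ f.ker ∨ N₂ ≤ f.ker := by
    intro f hf
    by_contra h
    push_neg at h
    obtain ⟨h1, h2⟩ := h
    have hm1 : (N₁.map f).Normal := Subgroup.Normal.map ‹_› f hf
    have hm2 : (N₂.map f).Normal := Subgroup.Normal.map ‹_› f hf
    have ht1 : N₁.map f = ⊤ := by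
      rcases hm1.eq_bot_or_eq_top with hb | ht
      · exact absurd (fun n hn => by
          have : f n ∈ N₁.map f := ⟨n, hn, rfl⟩
          rw [hb] at this
          simpa [MonoidHom.mem_ker] using this) h1
      · exact ht
    have ht2 : N₂.map f = ⊤ := by
      rcases hm2.eq_bot_or_eq_top with hb | ht
      · exact absurd (fun n hn => by
          have : f n ∈ N₂.map f := ⟨n, hn, rfl⟩
          rw [hb] at this
          simpa [MonoidHom.mem_ker] using this) h2
      · exact ht
    apply hS
    intro a b
    have ha : a ∈ N₁.map f := ht1 ▸ Subgroup.mem_top a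
    have hb : b ∈ N₂.map f := ht2 ▸ Subgroup.mem_top b
    obtain ⟨x, hx, rfl⟩ := ha
    obtain ⟨y, hy, rfl⟩ := hb
    rw [← map_mul, ← map_mul, hcomm x hx y hy]
  -- sets
  set A : Set (G →* S) := {f | Function.Surjective f ∧ N₁ ≤ f.ker} with hA
  set B : Set (G →* S) := {f | Function.Surjective f ∧ N₂ ≤ f.ker} with hB
  have hUnion : A ∪ B = {f : G →* S | Function.Surjective f} := by
    ext f
    simp only [hA, hB, Set.mem_union, Set.mem_setOf_eq]
    constructor
    · rintro (⟨h, _⟩ | ⟨h, _⟩) <;> exact h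
    · intro h
      rcases key f h with h' | h'
      · exact Or.inl ⟨h, h'⟩
      · exact Or.inr ⟨h, h'⟩
  have hInter : A ∩ B = {f : G →* S | Function.Surjective f ∧ N₁ ⊔ N₂ ≤ f.ker} := by
    ext f
    simp only [hA, hB, Set.mem_inter_iff, Set.mem_setOf_eq, sup_le_iff]
    tauto
  have e1 : Nat.card {f : G ⧸ N₁ →* S // Function.Surjective f} = Nat.card A :=
    Nat.card_congr (epiEquiv N₁)
  have e2 : Nat.card {f : G ⧸ N₂ →* S // Function.Surjective f} = Nat.card B :=
    Nat.card_congr (epiEquiv N₂)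
  have eQ : Nat.card {f : G ⧸ (N₁ ⊔ N₂) →* S // Function.Surjective f}
      = Nat.card ↥(A ∩ B) := by
    rw [hInter]; exact Nat.card_congr (epiEquiv (N₁ ⊔ N₂))
  have eG : Nat.card {f : G →* S // Function.Surjective f} = Nat.card ↥(A ∪ B) := by
    rw [hUnion]; rfl
  rw [e1, e2, eQ, eG]
  simp only [Nat.card_coe_set_eq]
  exact Set.ncard_union_add_ncard_inter A B (Set.toFinite A) (Set.toFinite B)
end

section
/- Let H be a finitely generated group and let S be a nonabelian finite simple group. Then |Epi(H × H, S)| = 2 · |Epi(H, S)|. -/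
lemma epi_prod_factor {H S : Type*} [Group H] [Group S] [IsSimpleGroup S]
    (hS : ¬ ∀ a b : S, a * b = b * a) (f : H × H →* S) (hf : Function.Surjective f) :
    (∃ g : H →* S, Function.Surjective g ∧ f = g.comp (MonoidHom.fst H H)) ∨
    (∃ g : H →* S, Function.Surjective g ∧ f = g.comp (MonoidHom.snd H H)) := by
  have hdec : ∀ x y : H, f (x, y) = f (x, 1) * f (1, y) := by
    intro x y; rw [← map_mul]; simp
  have hcomm : ∀ x y : H, f (x, 1) * f (1, y) = f (1, y) * f (x, 1) := by
    intro x y; rw [← map_mul, ← map_mul]; simp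
  set A := (f.comp (MonoidHom.inl H H)).range with hA
  set B := (f.comp (MonoidHom.inr H H)).range with hB
  have hAn : A.Normal := by
    constructor
    intro n hn g
    obtain ⟨x, rfl⟩ := hn
    obtain ⟨⟨u, v⟩, rfl⟩ := hf g
    refine ⟨u * x * u⁻¹, ?_⟩
    simp only [MonoidHom.comp_apply, MonoidHom.inl_apply]
    rw [← map_inv, ← map_mul, ← map_mul]
    congr 1
    simp [Prod.ext_iff]
  have hBn : B.Normal := by
    constructor
    intro n hn g
    obtain ⟨y, rfl⟩ := hn
    obtain ⟨⟨u, v⟩, rfl⟩ := hf g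
    refine ⟨v * y * v⁻¹, ?_⟩
    simp only [MonoidHom.comp_apply, MonoidHom.inr_apply]
    rw [← map_inv, ← map_mul, ← map_mul]
    congr 1
    simp [Prod.ext_iff]
  rcases hAn.eq_bot_or_eq_top with hA1 | hA1 <;> rcases hBn.eq_bot_or_eq_top with hB1 | hB1
  · -- both bot: contradiction with surjectivity
    exfalso
    obtain ⟨a, ha⟩ := exists_ne (1 : S)
    obtain ⟨⟨x, y⟩, rfl⟩ := hf a
    apply ha
    have h1 : f (x, 1) ∈ A := ⟨x, rfl⟩
    have h2 : f (1, y) ∈ B := ⟨y, rfl⟩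
    rw [hA1, Subgroup.mem_bot] at h1
    rw [hB1, Subgroup.mem_bot] at h2
    rw [hdec, h1, h2, one_mul]
  · -- A = ⊥, B = ⊤
    right
    refine ⟨f.comp (MonoidHom.inr H H), ?_, ?_⟩
    · rw [← MonoidHom.range_eq_top, ← hB, hB1]
    · ext ⟨x, y⟩
      have h1 : f (x, 1) ∈ A := ⟨x, rfl⟩
      rw [hA1, Subgroup.mem_bot] at h1
      show f (x, y) = f (1, y)
      rw [hdec, h1, one_mul]
  · -- A = ⊤, B = ⊥
    left
    refine ⟨f.comp (MonoidHom.inl H H), ?_, ?_⟩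
    · rw [← MonoidHom.range_eq_top, ← hA, hA1]
    · ext ⟨x, y⟩
      have h2 : f (1, y) ∈ B := ⟨y, rfl⟩
      rw [hB1, Subgroup.mem_bot] at h2
      show f (x, y) = f (x, 1)
      rw [hdec, h2, mul_one]
  · -- both top: S abelian, contradiction
    exfalso
    apply hS
    intro a b
    have h1 : a ∈ A := hA1 ▸ Subgroup.mem_top a
    have h2 : b ∈ B := hB1 ▸ Subgroup.mem_top b
    obtain ⟨x, rfl⟩ := h1
    obtain ⟨y, rfl⟩ := h2
    exact hcomm x y

/-- For a finitely generated group `H` and a nonabelian finite simple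
group `S`, `|Epi(H × H, S)| = 2 ⬝ |Epi(H, S)|`. -/
theorem stmt_2 {H : Type*} [Group H] [Group.FG H]
    (S : Type*) [Group S] [Finite S] [IsSimpleGroup S]
    (hS : ¬ ∀ a b : S, a * b = b * a) :
    Nat.card {f : H × H →* S // Function.Surjective f}
      = 2 * Nat.card {f : H →* S // Function.Surjective f} := by
  have hnt : Nontrivial S := inferInstance
  have hφ : Function.Bijective
      (fun p : Bool × {f : H →* S // Function.Surjective f} =>
        (⟨(p.2 : H →* S).comp (if p.1 then MonoidHom.fst H H else MonoidHom.snd H H),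
          (p.2.2).comp (by rcases p.1 with _ | _ <;> simp <;> intro x <;>
            [exact ⟨(1, x), rfl⟩; exact ⟨(x, 1), rfl⟩])⟩ :
          {f : H × H →* S // Function.Surjective f})) := by
    constructor
    · rintro ⟨b₁, g₁, hg₁⟩ ⟨b₂, g₂, hg₂⟩ h
      simp only [Subtype.mk.injEq] at h
      rcases b₁ with _ | _ <;> rcases b₂ with _ | _ <;>
        simp only [if_true, if_false, Bool.false_eq_true] at h ⊢
      · have : g₁ = g₂ := by
          ext x
          have := DFunLike.congr_fun h (1, x)
          simpa using this
        simp [this]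
      · exfalso
        obtain ⟨a, ha⟩ := exists_ne (1 : S)
        obtain ⟨x, rfl⟩ := hg₂ a
        have := DFunLike.congr_fun h (x, 1)
        simp at this
        exact ha this.symm
      · exfalso
        obtain ⟨a, ha⟩ := exists_ne (1 : S)
        obtain ⟨x, rfl⟩ := hg₁ a
        have := DFunLike.congr_fun h (x, 1)
        simp at this
        exact ha this
      · have : g₁ = g₂ := by
          ext x
          have := DFunLike.congr_fun h (x, 1)
          simpa using this
        simp [this]
    · rintro ⟨f, hf⟩
      rcases epi_prod_factor hS f hf with ⟨g, hg, rfl⟩ | ⟨g, hg, rfl⟩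
      · exact ⟨(true, ⟨g, hg⟩), by simp⟩
      · exact ⟨(false, ⟨g, hg⟩), by simp⟩
  calc Nat.card {f : H × H →* S // Function.Surjective f}
      = Nat.card (Bool × {f : H →* S // Function.Surjective f}) :=
        (Nat.card_congr (Equiv.ofBijective _ hφ)).symm
    _ = 2 * Nat.card {f : H →* S // Function.Surjective f} := by
        rw [Nat.card_prod, Nat.card_eq_fintype_card]; rfl
end

section
/- Let p : H → Q be a surjective group homomorphism with kernel N, where H is finitely generated and Q is finitely presented, let P ≤ H × H be the associated fibre product, and let S be a nonabelian finite simple group. Then |Epi(P, S)| = |Epi(H × H, S)| if and only if there is no surjective homomorphism from Q onto S. -/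
/-- A group is finitely presented if it is the quotient of a finitely generated free
group by the normal closure of finitely many relators. -/
def FinitelyPresentedGroup (Q : Type*) [Group Q] : Prop :=
  ∃ (n : ℕ) (rels : Finset (FreeGroup (Fin n))) (π : FreeGroup (Fin n) →* Q),
    Function.Surjective π ∧ π.ker = Subgroup.normalClosure (rels : Set (FreeGroup (Fin n)))

open Function

section Aux

/-- There are only finitely many homomorphisms from a f.g. group to a finite group. -/
private lemma finiteHom {G S : Type*} [Group G] [Group.FG G] [Group S] [Finite S] :
    Finite (G →* S) := by
  obtain ⟨T, hT1, hT2⟩ := Group.fg_iff.mp ‹Group.FG G›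
  haveI := hT2.to_subtype
  apply Finite.of_injective (fun f : G →* S => (fun t : T => f t))
  intro f g h
  exact MonoidHom.eq_of_eqOn_dense hT1 (fun x hx => congrFun h ⟨x, hx⟩)

/-- In a nonabelian simple group, two elementwise-commuting normal subgroups cannot
both be nontrivial. -/
private lemma keySimple {S : Type*} [Group S] [IsSimpleGroup S]
    (hS : ¬ ∀ a b : S, a * b = b * a) (A B : Subgroup S) (hA : A.Normal) (hB : B.Normal)
    (hcomm : ∀ a ∈ A, ∀ b ∈ B, a * b = b * a) : A = ⊥ ∨ B = ⊥ := by
  rcases hA.eq_bot_or_eq_top with h | h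
  · exact Or.inl h
  rcases hB.eq_bot_or_eq_top with h' | h'
  · exact Or.inr h'
  exact absurd (fun a b => hcomm a (h ▸ Subgroup.mem_top a) b (h' ▸ Subgroup.mem_top b)) hS

variable {H Q : Type*} [Group H] [Group Q] (p : H →* Q)

/-- The fibre product. -/
private abbrev Pg : Subgroup (H × H) :=
  MonoidHom.eqLocus (p.comp (MonoidHom.fst H H)) (p.comp (MonoidHom.snd H H))

/-- The diagonal homomorphism into the fibre product. -/
private abbrev diagP : H →* Pg p :=
  ((MonoidHom.id H).prod (MonoidHom.id H)).codRestrict _ (fun _ => rfl)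

private abbrev FstP : Pg p →* H := (MonoidHom.fst H H).comp (Pg p).subtype
private abbrev SndP : Pg p →* H := (MonoidHom.snd H H).comp (Pg p).subtype

private lemma FstP_surj : Surjective (FstP p) := fun h => ⟨diagP p h, rfl⟩

private lemma memPg (x : H × H) :
    x ∈ Pg p ↔ p x.1 = p x.2 := Iff.rfl

/-- The two "slices" of the kernel inside the fibre product. -/
private abbrev K1 : Subgroup (Pg p) := (p.ker.prod ⊥).subgroupOf (Pg p)
private abbrev K2 : Subgroup (Pg p) := ((⊥ : Subgroup H).prod p.ker).subgroupOf (Pg p)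

private lemma K1_normal : (K1 p).Normal := by
  constructor
  intro n hn g
  rw [Subgroup.mem_subgroupOf, Subgroup.mem_prod] at hn ⊢
  obtain ⟨hn1, hn2⟩ := hn
  have hcoe : ((g * n * g⁻¹ : Pg p) : H × H) = (g : H × H) * n * (g : H × H)⁻¹ := rfl
  rw [hcoe]
  constructor
  · exact (MonoidHom.normal_ker p).conj_mem _ hn1 _
  · simpa using hn2

private lemma K2_normal : (K2 p).Normal := by
  constructor
  intro n hn g
  rw [Subgroup.mem_subgroupOf, Subgroup.mem_prod] at hn ⊢
  obtain ⟨hn1, hn2⟩ := hn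
  constructor
  · simpa using hn1
  · exact (MonoidHom.normal_ker p).conj_mem _ hn2 _

end Aux

section Classify

variable {H Q S : Type*} [Group H] [Group Q] [Group S] [IsSimpleGroup S]

private lemma classifyHH (hS : ¬ ∀ a b : S, a * b = b * a)
    (F : H × H →* S) (hF : Surjective F) :
    ∃ g : H →* S, Surjective g ∧
      (F = g.comp (MonoidHom.fst H H) ∨ F = g.comp (MonoidHom.snd H H)) := by
  have hA : (((⊤ : Subgroup H).prod ⊥).map F).Normal := by
    refine Subgroup.Normal.map ?_ F hF
    constructor
    intro n hn g
    rw [Subgroup.mem_prod] at hn ⊢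
    exact ⟨Subgroup.mem_top _, by simpa using hn.2⟩
  have hB : (((⊥ : Subgroup H).prod ⊤).map F).Normal := by
    refine Subgroup.Normal.map ?_ F hF
    constructor
    intro n hn g
    rw [Subgroup.mem_prod] at hn ⊢
    exact ⟨by simpa using hn.1, Subgroup.mem_top _⟩
  have hcomm : ∀ a ∈ ((⊤ : Subgroup H).prod ⊥).map F, ∀ b ∈ ((⊥ : Subgroup H).prod ⊤).map F,
      a * b = b * a := by
    intro a ha b hb
    obtain ⟨x, hx, rfl⟩ := Subgroup.mem_map.mp ha
    obtain ⟨y, hy, rfl⟩ := Subgroup.mem_map.mp hb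
    rw [Subgroup.mem_prod] at hx hy
    have hx2 : x.2 = 1 := Subgroup.mem_bot.mp hx.2
    have hy1 : y.1 = 1 := Subgroup.mem_bot.mp hy.1
    rw [← map_mul, ← map_mul]
    congr 1
    ext <;> simp [hx2, hy1]
  have hmem1 : ∀ x : H × H, ((x.1, 1) : H × H) ∈ (⊤ : Subgroup H).prod ⊥ := by
    intro x
    rw [Subgroup.mem_prod]
    exact ⟨Subgroup.mem_top _, Subgroup.mem_bot.mpr rfl⟩
  have hmem2 : ∀ x : H × H, ((1, x.2) : H × H) ∈ (⊥ : Subgroup H).prod ⊤ := by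
    intro x
    rw [Subgroup.mem_prod]
    exact ⟨Subgroup.mem_bot.mpr rfl, Subgroup.mem_top _⟩
  have hdec : ∀ x : H × H, x = (x.1, 1) * (1, x.2) := by
    intro x; ext <;> simp
  rcases hA.eq_bot_or_eq_top with hA0 | hA1
  · -- F kills H × 1, so F factors through the second projection
    have hk1 : ∀ x : H × H, F (x.1, 1) = 1 := by
      intro x
      have h1 : F (x.1, 1) ∈ ((⊤ : Subgroup H).prod ⊥).map F :=
        Subgroup.mem_map_of_mem F (hmem1 x)
      rw [hA0] at h1
      exact Subgroup.mem_bot.mp h1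
    refine ⟨F.comp (MonoidHom.inr H H), ?_, Or.inr ?_⟩
    · intro s
      obtain ⟨x, rfl⟩ := hF s
      refine ⟨x.2, ?_⟩
      show F (1, x.2) = F x
      conv_rhs => rw [hdec x]
      rw [map_mul, hk1, one_mul]
    · ext x
      show F x = F (1, x.2)
      conv_lhs => rw [hdec x]
      rw [map_mul, hk1, one_mul]
  · -- A = ⊤, hence B = ⊥ and F factors through the first projection
    have hB0 : ((⊥ : Subgroup H).prod ⊤).map F = ⊥ := by
      rcases keySimple hS _ _ hA hB hcomm with h | h
      · exfalso
        obtain ⟨s, hs⟩ := exists_ne (1 : S)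
        have : s ∈ ((⊤ : Subgroup H).prod ⊥).map F := hA1 ▸ Subgroup.mem_top s
        rw [h] at this
        exact hs (Subgroup.mem_bot.mp this)
      · exact h
    have hk2 : ∀ x : H × H, F (1, x.2) = 1 := by
      intro x
      have h1 : F (1, x.2) ∈ ((⊥ : Subgroup H).prod ⊤).map F :=
        Subgroup.mem_map_of_mem F (hmem2 x)
      rw [hB0] at h1
      exact Subgroup.mem_bot.mp h1
    refine ⟨F.comp (MonoidHom.inl H H), ?_, Or.inl ?_⟩
    · intro s
      obtain ⟨x, rfl⟩ := hF s
      refine ⟨x.1, ?_⟩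
      show F (x.1, 1) = F x
      conv_rhs => rw [hdec x]
      rw [map_mul, hk2, mul_one]
    · ext x
      show F x = F (x.1, 1)
      conv_lhs => rw [hdec x]
      rw [map_mul, hk2, mul_one]

end Classify

section ClassifyP

variable {H Q S : Type*} [Group H] [Group Q] [Group S] [IsSimpleGroup S]

private lemma classifyP (p : H →* Q) (hp : Surjective p)
    (hS : ¬ ∀ a b : S, a * b = b * a)
    (f : Pg p →* S) (hf : Surjective f) :
    (∃ g : H →* S, Surjective g ∧ (∃ n, p n = 1 ∧ g n ≠ 1) ∧
      (f = g.comp (FstP p) ∨ f = g.comp (SndP p))) ∨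
    (∃ ψ : Q →* S, Surjective ψ ∧ f = ψ.comp (p.comp (FstP p))) := by
  have hA : ((K1 p).map f).Normal := (K1_normal p).map f hf
  have hB : ((K2 p).map f).Normal := (K2_normal p).map f hf
  have hcomm : ∀ a ∈ (K1 p).map f, ∀ b ∈ (K2 p).map f, a * b = b * a := by
    intro a ha b hb
    obtain ⟨x, hx, rfl⟩ := Subgroup.mem_map.mp ha
    obtain ⟨y, hy, rfl⟩ := Subgroup.mem_map.mp hb
    rw [Subgroup.mem_subgroupOf, Subgroup.mem_prod] at hx hy
    have hx2 : (x : H × H).2 = 1 := Subgroup.mem_bot.mp hx.2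
    have hy1 : (y : H × H).1 = 1 := Subgroup.mem_bot.mp hy.1
    rw [← map_mul, ← map_mul]
    congr 1
    apply Subtype.ext
    show (x : H × H) * y = (y : H × H) * x
    ext <;> simp [hx2, hy1]
  -- the canonical decompositions of an element of the fibre product
  have hmemK1 : ∀ x : Pg p, x * (diagP p (x : H × H).2)⁻¹ ∈ K1 p := by
    intro x
    have hx : p (x : H × H).1 = p (x : H × H).2 := x.2
    rw [Subgroup.mem_subgroupOf, Subgroup.mem_prod]
    constructor
    · show (x : H × H).1 * (x : H × H).2⁻¹ ∈ p.ker
      rw [MonoidHom.mem_ker, map_mul, map_inv, hx, mul_inv_cancel]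
    · show (x : H × H).2 * (x : H × H).2⁻¹ ∈ (⊥ : Subgroup H)
      simp
  have hmemK2 : ∀ x : Pg p, (diagP p (x : H × H).1)⁻¹ * x ∈ K2 p := by
    intro x
    have hx : p (x : H × H).1 = p (x : H × H).2 := x.2
    rw [Subgroup.mem_subgroupOf, Subgroup.mem_prod]
    constructor
    · show (x : H × H).1⁻¹ * (x : H × H).1 ∈ (⊥ : Subgroup H)
      simp
    · show (x : H × H).1⁻¹ * (x : H × H).2 ∈ p.ker
      rw [MonoidHom.mem_ker, map_mul, map_inv, hx, inv_mul_cancel]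
  have hdec1 : ∀ x : Pg p, x = (x * (diagP p (x : H × H).2)⁻¹) * diagP p (x : H × H).2 :=
    fun x => (inv_mul_cancel_right x _).symm
  have hdec2 : ∀ x : Pg p, x = diagP p (x : H × H).1 * ((diagP p (x : H × H).1)⁻¹ * x) :=
    fun x => (mul_inv_cancel_left _ x).symm
  -- explicit elements of K1 and K2
  have hun : ∀ n : H, p n = 1 → ∃ y : Pg p, y ∈ K1 p ∧ (y : H × H) = (n, 1) := by
    intro n hn
    refine ⟨⟨(n, 1), show p n = p 1 by simp [hn]⟩, ?_, rfl⟩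
    rw [Subgroup.mem_subgroupOf, Subgroup.mem_prod]
    exact ⟨MonoidHom.mem_ker.mpr hn, Subgroup.mem_bot.mpr rfl⟩
  have hvn : ∀ n : H, p n = 1 → ∃ y : Pg p, y ∈ K2 p ∧ (y : H × H) = (1, n) := by
    intro n hn
    refine ⟨⟨(1, n), show p 1 = p n by simp [hn]⟩, ?_, rfl⟩
    rw [Subgroup.mem_subgroupOf, Subgroup.mem_prod]
    exact ⟨Subgroup.mem_bot.mpr rfl, MonoidHom.mem_ker.mpr hn⟩
  rcases hA.eq_bot_or_eq_top with hA0 | hA1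
  · have hk1 : ∀ y ∈ K1 p, f y = 1 := by
      intro y hy
      have h1 : f y ∈ (K1 p).map f := Subgroup.mem_map_of_mem f hy
      rw [hA0] at h1
      exact Subgroup.mem_bot.mp h1
    have hfx2 : ∀ x : Pg p, f x = f (diagP p (x : H × H).2) := by
      intro x
      conv_lhs => rw [hdec1 x]
      rw [map_mul, hk1 _ (hmemK1 x), one_mul]
    rcases hB.eq_bot_or_eq_top with hB0 | hB1
    · -- both trivial: f factors through Q
      have hk2 : ∀ y ∈ K2 p, f y = 1 := by
        intro y hy
        have h1 : f y ∈ (K2 p).map f := Subgroup.mem_map_of_mem f hy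
        rw [hB0] at h1
        exact Subgroup.mem_bot.mp h1
      have hfx1 : ∀ x : Pg p, f x = f (diagP p (x : H × H).1) := by
        intro x
        conv_lhs => rw [hdec2 x]
        rw [map_mul, hk2 _ (hmemK2 x), mul_one]
      have hker : p.ker ≤ (f.comp (diagP p)).ker := by
        intro n hn
        obtain ⟨y, hy, hyc⟩ := hun n (MonoidHom.mem_ker.mp hn)
        obtain ⟨z, hz, hzc⟩ := hvn n (MonoidHom.mem_ker.mp hn)
        have hsplit : diagP p n = y * z := by
          apply Subtype.ext
          show ((n, n) : H × H) = (y : H × H) * z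
          rw [hyc, hzc]
          ext <;> simp
        rw [MonoidHom.mem_ker, MonoidHom.comp_apply, hsplit, map_mul, hk1 _ hy, hk2 _ hz,
          one_mul]
      set ψ : Q →* S :=
        p.liftOfRightInverse (surjInv hp) (rightInverse_surjInv hp) ⟨f.comp (diagP p), hker⟩
        with hψdef
      have hψp : ∀ h : H, ψ (p h) = f (diagP p h) := fun h =>
        p.liftOfRightInverse_comp_apply _ _ ⟨f.comp (diagP p), hker⟩ h
      refine Or.inr ⟨ψ, ?_, ?_⟩
      · intro s
        obtain ⟨x, rfl⟩ := hf s
        exact ⟨p (x : H × H).1, by rw [hψp, ← hfx1]⟩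
      · ext x
        rw [hfx1 x]
        exact (hψp _).symm
    · -- K2 surjects: f factors through the second projection
      refine Or.inl ⟨f.comp (diagP p), ?_, ?_, Or.inr ?_⟩
      · intro s
        obtain ⟨x, rfl⟩ := hf s
        exact ⟨(x : H × H).2, (hfx2 x).symm⟩
      · obtain ⟨s, hs⟩ := exists_ne (1 : S)
        have hsmem : s ∈ (K2 p).map f := hB1 ▸ Subgroup.mem_top s
        obtain ⟨y, hy, rfl⟩ := Subgroup.mem_map.mp hsmem
        have hy' := hy
        rw [Subgroup.mem_subgroupOf, Subgroup.mem_prod] at hy'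
        have hy1 : (y : H × H).1 = 1 := Subgroup.mem_bot.mp hy'.1
        have hn : p (y : H × H).2 = 1 := MonoidHom.mem_ker.mp hy'.2
        refine ⟨(y : H × H).2, hn, ?_⟩
        obtain ⟨z, hz, hzc⟩ := hun (y : H × H).2 hn
        have hsplit : diagP p (y : H × H).2 = z * y := by
          apply Subtype.ext
          show (((y : H × H).2, (y : H × H).2) : H × H) = (z : H × H) * y
          rw [hzc]
          ext <;> simp [hy1]
        show f (diagP p (y : H × H).2) ≠ 1
        rw [hsplit, map_mul, hk1 _ hz, one_mul]
        exact hs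
      · ext x
        rw [hfx2 x]
        rfl
  · -- K1 surjects: then K2 dies and f factors through the first projection
    have hB0 : (K2 p).map f = ⊥ := by
      rcases keySimple hS _ _ hA hB hcomm with h | h
      · exfalso
        obtain ⟨s, hs⟩ := exists_ne (1 : S)
        have : s ∈ (K1 p).map f := hA1 ▸ Subgroup.mem_top s
        rw [h] at this
        exact hs (Subgroup.mem_bot.mp this)
      · exact h
    have hk2 : ∀ y ∈ K2 p, f y = 1 := by
      intro y hy
      have h1 : f y ∈ (K2 p).map f := Subgroup.mem_map_of_mem f hy
      rw [hB0] at h1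
      exact Subgroup.mem_bot.mp h1
    have hfx1 : ∀ x : Pg p, f x = f (diagP p (x : H × H).1) := by
      intro x
      conv_lhs => rw [hdec2 x]
      rw [map_mul, hk2 _ (hmemK2 x), mul_one]
    refine Or.inl ⟨f.comp (diagP p), ?_, ?_, Or.inl ?_⟩
    · intro s
      obtain ⟨x, rfl⟩ := hf s
      exact ⟨(x : H × H).1, (hfx1 x).symm⟩
    · obtain ⟨s, hs⟩ := exists_ne (1 : S)
      have hsmem : s ∈ (K1 p).map f := hA1 ▸ Subgroup.mem_top s
      obtain ⟨y, hy, rfl⟩ := Subgroup.mem_map.mp hsmem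
      have hy' := hy
      rw [Subgroup.mem_subgroupOf, Subgroup.mem_prod] at hy'
      have hy2 : (y : H × H).2 = 1 := Subgroup.mem_bot.mp hy'.2
      have hn : p (y : H × H).1 = 1 := MonoidHom.mem_ker.mp hy'.1
      refine ⟨(y : H × H).1, hn, ?_⟩
      obtain ⟨z, hz, hzc⟩ := hvn (y : H × H).1 hn
      have hsplit : diagP p (y : H × H).1 = y * z := by
        apply Subtype.ext
        show (((y : H × H).1, (y : H × H).1) : H × H) = (y : H × H) * z
        rw [hzc]
        ext <;> simp [hy2]
      show f (diagP p (y : H × H).1) ≠ 1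
      rw [hsplit, map_mul, hk2 _ hz, mul_one]
      exact hs
    · ext x
      rw [hfx1 x]
      rfl

end ClassifyP

section Counting

variable {H Q S : Type*} [Group H] [Group Q] [Group S] [IsSimpleGroup S]

private lemma cardHH [Group.FG H] [Finite S] (hS : ¬ ∀ a b : S, a * b = b * a) :
    Nat.card {F : H × H →* S // Surjective F} = 2 * Nat.card {g : H →* S // Surjective g} := by
  haveI : Finite (H →* S) := finiteHom
  have sf : ∀ g : H →* S, Surjective g → Surjective (g.comp (MonoidHom.fst H H)) := by
    intro g hg s
    obtain ⟨h, hh⟩ := hg s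
    exact ⟨(h, 1), hh⟩
  have ss : ∀ g : H →* S, Surjective g → Surjective (g.comp (MonoidHom.snd H H)) := by
    intro g hg s
    obtain ⟨h, hh⟩ := hg s
    exact ⟨(1, h), hh⟩
  let θ : {g : H →* S // Surjective g} ⊕ {g : H →* S // Surjective g} →
      {F : H × H →* S // Surjective F} :=
    Sum.elim (fun g => ⟨g.1.comp (MonoidHom.fst H H), sf g.1 g.2⟩)
      (fun g => ⟨g.1.comp (MonoidHom.snd H H), ss g.1 g.2⟩)
  have hbij : Bijective θ := by
    constructor
    · rintro (⟨g, hg⟩ | ⟨g, hg⟩) (⟨g', hg'⟩ | ⟨g', hg'⟩) h <;>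
        have hval := congrArg Subtype.val h
    -- case 1
      · have : g = g' := MonoidHom.ext fun a => DFunLike.congr_fun hval (a, 1)
        subst this; rfl
      · exfalso
        obtain ⟨s, hs⟩ := exists_ne (1 : S)
        obtain ⟨a, rfl⟩ := hg s
        have h1 : g a = g' 1 := DFunLike.congr_fun hval (a, 1)
        rw [map_one] at h1
        exact hs h1
      · exfalso
        obtain ⟨s, hs⟩ := exists_ne (1 : S)
        obtain ⟨a, rfl⟩ := hg s
        have h1 : g a = g' 1 := DFunLike.congr_fun hval (1, a)
        rw [map_one] at h1
        exact hs h1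
      · have : g = g' := MonoidHom.ext fun a => DFunLike.congr_fun hval (1, a)
        subst this; rfl
    · rintro ⟨F, hF⟩
      rcases classifyHH hS F hF with ⟨g, hg, hc | hc⟩
      · exact ⟨Sum.inl ⟨g, hg⟩, Subtype.ext hc.symm⟩
      · exact ⟨Sum.inr ⟨g, hg⟩, Subtype.ext hc.symm⟩
  rw [← Nat.card_eq_of_bijective θ hbij, Nat.card_sum, two_mul]

private lemma cardH [Group.FG H] [Group.FG Q] [Finite S] (p : H →* Q) (hp : Surjective p) :
    Nat.card {g : H →* S // Surjective g}
      = Nat.card {g : H →* S // Surjective g ∧ ∃ n, p n = 1 ∧ g n ≠ 1}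
        + Nat.card {ψ : Q →* S // Surjective ψ} := by
  classical
  haveI : Finite (H →* S) := finiteHom
  haveI : Finite (Q →* S) := finiteHom
  have sp : ∀ ψ : Q →* S, Surjective ψ → Surjective (ψ.comp p) := by
    intro ψ hψ s
    obtain ⟨q, hq⟩ := hψ s
    obtain ⟨h, rfl⟩ := hp q
    exact ⟨h, hq⟩
  let θ : {g : H →* S // Surjective g ∧ ∃ n, p n = 1 ∧ g n ≠ 1} ⊕ {ψ : Q →* S // Surjective ψ} →
      {g : H →* S // Surjective g} :=
    Sum.elim (fun g => ⟨g.1, g.2.1⟩) (fun ψ => ⟨ψ.1.comp p, sp ψ.1 ψ.2⟩)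
  have hbij : Bijective θ := by
    constructor
    · rintro (⟨g, hg, hgn⟩ | ⟨ψ, hψ⟩) (⟨g', hg', hgn'⟩ | ⟨ψ', hψ'⟩) h <;>
        have hval := congrArg Subtype.val h
      · have : g = g' := hval
        subst this; rfl
      · exfalso
        obtain ⟨n, hn, hgn1⟩ := hgn
        have h1 : g n = ψ' (p n) := DFunLike.congr_fun hval n
        rw [hn, map_one] at h1
        exact hgn1 h1
      · exfalso
        obtain ⟨n, hn, hgn1⟩ := hgn'
        have h1 : ψ (p n) = g' n := DFunLike.congr_fun hval n
        rw [hn, map_one] at h1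
        exact hgn1 h1.symm
      · have : ψ = ψ' := by
          ext q
          obtain ⟨h, rfl⟩ := hp q
          exact DFunLike.congr_fun hval h
        subst this; rfl
    · rintro ⟨g, hg⟩
      by_cases hc : ∃ n, p n = 1 ∧ g n ≠ 1
      · exact ⟨Sum.inl ⟨g, hg, hc⟩, rfl⟩
      · push_neg at hc
        have hker : p.ker ≤ g.ker := fun n hn =>
          MonoidHom.mem_ker.mpr (hc n (MonoidHom.mem_ker.mp hn))
        set ψ : Q →* S :=
          p.liftOfRightInverse (surjInv hp) (rightInverse_surjInv hp) ⟨g, hker⟩ with hψdef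
        have hψp : ∀ h : H, ψ (p h) = g h := fun h =>
          p.liftOfRightInverse_comp_apply _ _ ⟨g, hker⟩ h
        have hψs : Surjective ψ := by
          intro s
          obtain ⟨h, rfl⟩ := hg s
          exact ⟨p h, hψp h⟩
        exact ⟨Sum.inr ⟨ψ, hψs⟩, Subtype.ext (MonoidHom.ext fun h => hψp h)⟩
  rw [← Nat.card_eq_of_bijective θ hbij, Nat.card_sum]

private lemma cardP [Group.FG H] [Group.FG Q] [Finite S] (p : H →* Q) (hp : Surjective p)
    (hS : ¬ ∀ a b : S, a * b = b * a) :
    Nat.card {f : Pg p →* S // Surjective f}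
      = 2 * Nat.card {g : H →* S // Surjective g ∧ ∃ n, p n = 1 ∧ g n ≠ 1}
        + Nat.card {ψ : Q →* S // Surjective ψ} := by
  classical
  haveI : Finite (H →* S) := finiteHom
  haveI : Finite (Q →* S) := finiteHom
  have sF : ∀ g : H →* S, Surjective g → Surjective (g.comp (FstP p)) := by
    intro g hg s
    obtain ⟨h, hh⟩ := hg s
    exact ⟨diagP p h, hh⟩
  have sS : ∀ g : H →* S, Surjective g → Surjective (g.comp (SndP p)) := by
    intro g hg s
    obtain ⟨h, hh⟩ := hg s
    exact ⟨diagP p h, hh⟩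
  have sQ : ∀ ψ : Q →* S, Surjective ψ → Surjective (ψ.comp (p.comp (FstP p))) := by
    intro ψ hψ s
    obtain ⟨q, hq⟩ := hψ s
    obtain ⟨h, rfl⟩ := hp q
    exact ⟨diagP p h, hq⟩
  let θ : ({g : H →* S // Surjective g ∧ ∃ n, p n = 1 ∧ g n ≠ 1} ⊕
        {g : H →* S // Surjective g ∧ ∃ n, p n = 1 ∧ g n ≠ 1}) ⊕
        {ψ : Q →* S // Surjective ψ} →
      {f : Pg p →* S // Surjective f} :=
    Sum.elim
      (Sum.elim (fun g => ⟨g.1.comp (FstP p), sF g.1 g.2.1⟩)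
        (fun g => ⟨g.1.comp (SndP p), sS g.1 g.2.1⟩))
      (fun ψ => ⟨ψ.1.comp (p.comp (FstP p)), sQ ψ.1 ψ.2⟩)
  have hbij : Bijective θ := by
    constructor
    · rintro ((⟨g, hg, hgn⟩ | ⟨g, hg, hgn⟩) | ⟨ψ, hψ⟩)
        ((⟨g', hg', hgn'⟩ | ⟨g', hg', hgn'⟩) | ⟨ψ', hψ'⟩) h <;>
        have hval := congrArg Subtype.val h
      · have : g = g' := MonoidHom.ext fun a => DFunLike.congr_fun hval (diagP p a)
        subst this; rfl
      · exfalso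
        obtain ⟨n, hn, hgn1⟩ := hgn
        have h1 : g n = g' 1 :=
          DFunLike.congr_fun hval ⟨(n, 1), show p n = p 1 by simp [hn]⟩
        rw [map_one] at h1
        exact hgn1 h1
      · exfalso
        obtain ⟨n, hn, hgn1⟩ := hgn
        have h1 : g n = ψ' (p n) := DFunLike.congr_fun hval (diagP p n)
        rw [hn, map_one] at h1
        exact hgn1 h1
      · exfalso
        obtain ⟨n, hn, hgn1⟩ := hgn'
        have h1 : g 1 = g' n :=
          DFunLike.congr_fun hval ⟨(n, 1), show p n = p 1 by simp [hn]⟩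
        rw [map_one] at h1
        exact hgn1 h1.symm
      · have : g = g' := MonoidHom.ext fun a => DFunLike.congr_fun hval (diagP p a)
        subst this; rfl
      · exfalso
        obtain ⟨n, hn, hgn1⟩ := hgn
        have h1 : g n = ψ' (p 1) :=
          DFunLike.congr_fun hval ⟨(1, n), show p 1 = p n by simp [hn]⟩
        rw [map_one, map_one] at h1
        exact hgn1 h1
      · exfalso
        obtain ⟨n, hn, hgn1⟩ := hgn'
        have h1 : ψ (p n) = g' n := DFunLike.congr_fun hval (diagP p n)
        rw [hn, map_one] at h1
        exact hgn1 h1.symm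
      · exfalso
        obtain ⟨n, hn, hgn1⟩ := hgn'
        have h1 : ψ (p 1) = g' n :=
          DFunLike.congr_fun hval ⟨(1, n), show p 1 = p n by simp [hn]⟩
        rw [map_one, map_one] at h1
        exact hgn1 h1.symm
      · have : ψ = ψ' := by
          ext q
          obtain ⟨h, rfl⟩ := hp q
          exact DFunLike.congr_fun hval (diagP p h)
        subst this; rfl
    · rintro ⟨f, hf⟩
      rcases classifyP p hp hS f hf with ⟨g, hg, hgn, hc | hc⟩ | ⟨ψ, hψ, hc⟩
      · exact ⟨Sum.inl (Sum.inl ⟨g, hg, hgn⟩), Subtype.ext hc.symm⟩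
      · exact ⟨Sum.inl (Sum.inr ⟨g, hg, hgn⟩), Subtype.ext hc.symm⟩
      · exact ⟨Sum.inr ⟨ψ, hψ⟩, Subtype.ext hc.symm⟩
  rw [← Nat.card_eq_of_bijective θ hbij, Nat.card_sum, Nat.card_sum, two_mul]

end Counting

/-- Let `p : H → Q` be surjective with kernel `N`, `H` finitely generated,
`Q` finitely presented, `P ≤ H × H` the fibre product, `S` a nonabelian finite simple
group. Then `|Epi(P,S)| = |Epi(H × H, S)|` iff there is no epimorphism `Q → S`. -/
theorem stmt_4 {H Q : Type*} [Group H] [Group Q] [Group.FG H]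
    (hQ : FinitelyPresentedGroup Q)
    (p : H →* Q) (hp : Function.Surjective p)
    (N : Subgroup H) (hN : p.ker = N)
    (S : Type*) [Group S] [Finite S] [IsSimpleGroup S]
    (hS : ¬ ∀ a b : S, a * b = b * a) :
    Nat.card {f : (MonoidHom.eqLocus (p.comp (MonoidHom.fst H H))
          (p.comp (MonoidHom.snd H H))) →* S // Function.Surjective f}
        = Nat.card {f : H × H →* S // Function.Surjective f}
      ↔ ¬ ∃ ψ : Q →* S, Function.Surjective ψ := by
  haveI hQfg : Group.FG Q := by
    obtain ⟨n, rels, π, hπ, -⟩ := hQ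
    haveI : Group.FG (FreeGroup (Fin n)) :=
      Group.fg_iff.mpr ⟨Set.range FreeGroup.of, FreeGroup.closure_range_of _,
        Set.finite_range _⟩
    exact Group.fg_of_surjective hπ
  haveI : Finite (Q →* S) := finiteHom
  show Nat.card {f : Pg p →* S // Function.Surjective f}
      = Nat.card {f : H × H →* S // Function.Surjective f}
      ↔ ¬ ∃ ψ : Q →* S, Function.Surjective ψ
  rw [cardP p hp hS, cardHH hS, cardH p hp]
  have hq0 : Nat.card {ψ : Q →* S // Function.Surjective ψ} = 0
      ↔ ¬ ∃ ψ : Q →* S, Function.Surjective ψ := by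
    rw [Nat.card_eq_zero]
    constructor
    · rintro (h1 | h2)
      · exact fun ⟨ψ, hψ⟩ => h1.false ⟨ψ, hψ⟩
      · exact absurd h2 (not_infinite_iff_finite.mpr inferInstance)
    · intro h
      exact Or.inl ⟨fun ⟨ψ, hψ⟩ => h ⟨ψ, hψ⟩⟩
  rw [← hq0]
  omega
end

section
/- Let p : H → Q be a surjective group homomorphism with kernel N, and let P ≤ H × H be the associated fibre product. Then the following are equivalent: (i) Q has no nontrivial finite quotients; (ii) for every finite group F and every surjective homomorphism φ : H × H → F, the image φ(P) equals F. -/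
/-- Let `p : H → Q` be a surjective homomorphism with kernel `N` and let
`P ≤ H × H` be the associated fibre product. Then `Q` has no nontrivial finite
quotients iff every surjective homomorphism from `H × H` to a finite group maps `P`
onto the whole finite group. -/
theorem stmt_6 {H Q : Type*} [Group H] [Group Q]
    (p : H →* Q) (hp : Function.Surjective p)
    (N : Subgroup H) (hN : p.ker = N)
    (P : Subgroup (H × H))
    (hP : P = MonoidHom.eqLocus (p.comp (MonoidHom.fst H H)) (p.comp (MonoidHom.snd H H))) :
    (∀ (F : Type u) [Group F] [Finite F] (φ : Q →* F), φ = 1)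
      ↔ (∀ (F : Type u) [Group F] [Finite F] (φ : H × H →* F),
          Function.Surjective φ → Subgroup.map φ P = ⊤) := by
  have hNnorm : N.Normal := hN ▸ p.normal_ker
  have hPmem : ∀ a b : H, (a, b) ∈ P ↔ p a = p b := by
    intro a b
    rw [hP]
    rfl
  constructor
  · intro hQ F _ _ φ hφ
    -- L = φ(N × ⊥) is normal in F
    have hN1norm : (N.prod (⊥ : Subgroup H)).Normal := Subgroup.prod_normal N ⊥
    set L : Subgroup F := Subgroup.map φ (N.prod ⊥) with hL
    have hLnorm : L.Normal := Subgroup.Normal.map hN1norm φ hφ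
    -- the map H → F/L, h ↦ φ(h,1) mod L, kills N
    set ψ : H →* F ⧸ L :=
      (QuotientGroup.mk' L).comp (φ.comp (MonoidHom.inl H H)) with hψ
    have hker : ∀ x : H, p x = 1 → ψ x = 1 := by
      intro x hx
      have hxN : x ∈ N := by rw [← hN]; exact hx
      have : φ (x, 1) ∈ L := ⟨(x, 1), ⟨hxN, Subgroup.mem_bot.mpr rfl⟩, rfl⟩
      simpa [hψ, QuotientGroup.eq_one_iff] using this
    -- factor through Q, use triviality
    have hRI : Function.RightInverse (Function.surjInv hp) p :=
      Function.rightInverse_surjInv hp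
    set χ : Q →* F ⧸ L := p.liftOfRightInverse (Function.surjInv hp) hRI ⟨ψ, hker⟩ with hχ
    have hχ1 : χ = 1 := hQ _ χ
    have hψ1 : ∀ h : H, ψ h = 1 := by
      intro h
      have h2 : χ (p h) = ψ h :=
        p.liftOfRightInverse_comp_apply (Function.surjInv hp) hRI ⟨ψ, hker⟩ h
      rw [← h2, hχ1]
      rfl
    -- so φ(h,1) ∈ L ≤ φ(P)
    have hLP : L ≤ Subgroup.map φ P := by
      apply Subgroup.map_mono
      rintro ⟨a, b⟩ ⟨haN, hb⟩
      rw [hPmem]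
      have hb1 : b = 1 := Subgroup.mem_bot.mp hb
      have ha1 : p a = 1 := by rw [← hN] at haN; exact haN
      simp [hb1, ha1]
    have hfirst : ∀ h : H, φ (h, 1) ∈ Subgroup.map φ P := by
      intro h
      apply hLP
      have := hψ1 h
      simpa [hψ, QuotientGroup.eq_one_iff] using this
    rw [eq_top_iff]
    rintro x -
    obtain ⟨⟨a, b⟩, rfl⟩ := hφ x
    have hsplit : φ (a, b) = φ (a * b⁻¹, 1) * φ (b, b) := by
      rw [← map_mul]
      congr 1
      simp
    rw [hsplit]
    exact Subgroup.mul_mem _ (hfirst _)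
      (Subgroup.mem_map.mpr ⟨(b, b), (hPmem b b).mpr rfl, rfl⟩)
  · intro h F _ _ φ
    set G := φ.range with hG
    set φ' : Q →* G := φ.rangeRestrict with hφ'
    have hφ'surj : Function.Surjective φ' := φ.rangeRestrict_surjective
    set Φ : H × H →* G × G := (φ'.comp p).prodMap (φ'.comp p) with hΦ
    have hΦsurj : Function.Surjective Φ := fun ⟨g₁, g₂⟩ => by
      obtain ⟨a, ha⟩ := (hφ'surj.comp hp) g₁
      obtain ⟨b, hb⟩ := (hφ'surj.comp hp) g₂
      exact ⟨(a, b), Prod.ext ha hb⟩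
    have htop := h (G × G) Φ hΦsurj
    -- every element of the range is 1
    have hone : ∀ x : Q, φ' x = 1 := by
      intro x
      have : (φ' x, (1 : G)) ∈ Subgroup.map Φ P := by rw [htop]; trivial
      obtain ⟨⟨a, b⟩, hab, heq⟩ := this
      have hpab : p a = p b := (hPmem a b).mp hab
      have h1 : φ' (p a) = φ' x := congrArg Prod.fst heq
      have h2 : φ' (p b) = 1 := congrArg Prod.snd heq
      rw [← h1, hpab, h2]
    ext x
    exact congrArg Subtype.val (hone x)
end

section
/- (Platonov–Tavgen criterion.) Let 1 → N → H → Q → 1 be an exact sequence of groups in which N, H and Q are all finitely generated, and let P ≤ H × H be the associated fibre product. Suppose that the second group homology H₂(Q, ℤ) (with trivial ℤ-coefficients) vanishes and that Q has no nontrivial finite quotients. Then for every finite group F, the restriction map Hom(H × H, F) → Hom(P, F) given by precomposition with the inclusion P ↪ H × H is a bijection; equivalently, the inclusion P ↪ H × H induces an isomorphism of profinite completions. -/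
/-!
Injectivity: two homomorphisms `H → F` agreeing on `N` agree on a finite-index subgroup
containing `N`; its normal core contains `N`, so `H` modulo it is a finite quotient of `Q`,
hence trivial.

Surjectivity: for `φ : P → F` the subgroups `A = φ(N × 1)` and `B = φ(1 × N)` commute, and
`D x = φ(x, x)` lands in `AB` for the same reason as above. Pulling `A × B → AB` back along
`D` gives a central extension `E → H`, and `n ↦ (n, φ(n, 1), φ(1, n))` is an equivariant
section over `N`. Lift a free presentation `Φ → H` to `E`; on `R = ker(Φ → Q)` its defect from
the section is a central, conjugation-invariant homomorphism, so it kills `[Φ, R]`, hence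
`R ∩ [Φ, Φ]` (Hopf: `H₂(Q) = 0`), and extends to `Φ` because `R[Φ, Φ] = Φ` (`H₁(Q) = 0`).
Correcting the lift by it yields a section `H → E` extending the given one; its components
`a, b : H → F` commute and `(x, y) ↦ a x * b y` restricts to `φ` on `P`.
-/

open Subgroup Function

theorem MonoidHom.exists_comp_eq_of_ker_le {G G' K : Type*} [Group G] [Group G'] [Group K]
    {f : G →* G'} (hf : Surjective f) (g : G →* K) (hg : f.ker ≤ g.ker) :
    ∃ g' : G' →* K, ∀ x, g' (f x) = g x :=
  ⟨_, f.liftOfRightInverse_comp_apply _ (rightInverse_surjInv hf) ⟨g, hg⟩⟩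

section NoFiniteQuotients

variable {H Q : Type*} [Group H] [Group Q]
  (hQ : ∀ (F : Type*) [Group F] [Finite F] (φ : Q →* F), φ = 1)
include hQ

theorem MonoidHom.eq_one_of_forall_finite {K : Type*} [Group K] [Finite K] (θ : Q →* K) :
    θ = 1 := by
  have hθ := hQ (Shrink K) (Shrink.mulEquiv.symm.toMonoidHom.comp θ)
  ext x
  simpa using DFunLike.congr_fun hθ x

omit hQ in
theorem CommGroup.subsingleton_of_fg_of_forall_finite {A : Type*} [CommGroup A] [Group.FG A]
    (hA : ∀ (F : Type*) [Group F] [Finite F] (φ : A →* F), φ = 1) : Subsingleton A := by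
  classical
  obtain ⟨ι, j, _, _, p, hp, e, ⟨f⟩⟩ := CommGroup.equiv_free_prod_prod_multiplicative_zmod A
  -- a free factor would map onto `ZMod 2`
  have : IsEmpty j := by
    refine ⟨fun i ↦ ?_⟩
    let θ : A →* Multiplicative (ZMod 2) :=
      (Int.castAddHom (ZMod 2)).toMultiplicative.comp
        ((Pi.evalMonoidHom _ i).comp ((MonoidHom.fst _ _).comp f.toMonoidHom))
    have := DFunLike.congr_fun (θ.eq_one_of_forall_finite hA)
      (f.symm (Pi.mulSingle i (Multiplicative.ofAdd 1), 1))
    simp [θ] at this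
  have : ∀ i, NeZero (p i ^ e i) := fun i ↦ ⟨pow_ne_zero _ (hp i).ne_zero⟩
  have : Finite A := Finite.of_equiv _ f.symm.toEquiv
  have := (MonoidHom.id A).eq_one_of_forall_finite hA
  exact ⟨fun x y ↦ (DFunLike.congr_fun this x).trans (DFunLike.congr_fun this y).symm⟩

theorem commutator_eq_top_of_forall_finite [Group.FG Q] : commutator Q = ⊤ := by
  have : Group.FG (Abelianization Q) :=
    Group.fg_of_surjective (f := Abelianization.of) QuotientGroup.mk_surjective
  have : Subsingleton (Abelianization Q) :=
    CommGroup.subsingleton_of_fg_of_forall_finite fun (F : Type) _ _ θ ↦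
      Abelianization.hom_ext _ _ (by rw [MonoidHom.eq_one_of_forall_finite hQ (θ.comp _)]; rfl)
  rw [← Abelianization.ker_of]
  exact eq_top_iff.mpr fun x _ ↦ MonoidHom.mem_ker.mpr (Subsingleton.elim _ _)

theorem MonoidHom.eq_one_of_ker_le {p : H →* Q} (hp : Surjective p) {K : Type*} [Group K]
    [Finite K] (g : H →* K) (hg : p.ker ≤ g.ker) : g = 1 := by
  obtain ⟨θ, hθ⟩ := MonoidHom.exists_comp_eq_of_ker_le hp g hg
  ext x
  rw [← hθ, θ.eq_one_of_forall_finite hQ]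
  rfl

theorem Subgroup.eq_top_of_ker_le {p : H →* Q} (hp : Surjective p) (S : Subgroup H)
    [S.FiniteIndex] (hS : p.ker ≤ S) : S = ⊤ := by
  have hcore := MonoidHom.eq_one_of_ker_le hQ hp (QuotientGroup.mk' S.normalCore)
    (by rwa [QuotientGroup.ker_mk', normal_le_normalCore])
  refine eq_top_iff.mpr fun x _ ↦ S.normalCore_le ?_
  simpa [QuotientGroup.eq_one_iff] using DFunLike.congr_fun hcore x

theorem MonoidHom.eq_of_eqOn_ker {p : H →* Q} (hp : Surjective p) {K : Type*} [Group K]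
    [Finite K] {f g : H →* K} (hfg : ∀ n ∈ p.ker, f n = g n) : f = g := by
  have : (f.eqLocus g).FiniteIndex := finiteIndex_of_le (H := (f.prod g).ker) fun x hx ↦ by
    simp only [mem_ker, MonoidHom.prod_apply, Prod.mk_eq_one] at hx
    exact hx.1.trans hx.2.symm
  have := Subgroup.eq_top_of_ker_le hQ hp (f.eqLocus g) hfg
  ext x
  exact (this ▸ mem_top x : x ∈ f.eqLocus g)

end NoFiniteQuotients

section CentralExtensions

variable {Φ : Type*} [Group Φ]

theorem sup_commutator_eq_top_of_surjective {Q : Type*} [Group Q] {ρ : Φ →* Q}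
    (hρ : Surjective ρ) (hQ : commutator Q = ⊤) : ρ.ker ⊔ commutator Φ = ⊤ := by
  rw [sup_comm, ← comap_map_eq, commutator_def, map_commutator, map_top_of_surjective _ hρ,
    ← commutator_def, hQ, comap_top]

theorem commutator_top_le_map_subtype_ker {K : Type*} [Group K] (R : Subgroup Φ) [hR : R.Normal]
    (d : R →* K) (hd : ∀ (u : Φ) (r : R), d ⟨u * r * u⁻¹, hR.conj_mem r r.2 u⟩ = d r) :
    ⁅(⊤ : Subgroup Φ), R⁆ ≤ d.ker.map R.subtype := by
  rw [commutator_le]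
  intro u _ r hr
  refine ⟨⟨u * r * u⁻¹, hR.conj_mem r hr u⟩ * ⟨r, hr⟩⁻¹, ?_, by simp [commutatorElement_def]⟩
  rw [SetLike.mem_coe, MonoidHom.mem_ker, map_mul, map_inv, hd u ⟨r, hr⟩, mul_inv_cancel]

theorem exists_extension_of_sup_commutator_eq_top {K : Type*} [CommGroup K] {R : Subgroup Φ}
    (hR : R ⊔ commutator Φ = ⊤) (d : R →* K) (hd : R ⊓ commutator Φ ≤ d.ker.map R.subtype) :
    ∃ D : Φ →* K, ∀ r : R, D r = d r := by
  have hof : Surjective (Abelianization.of (G := Φ)) := QuotientGroup.mk_surjective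
  let ab : R →* Abelianization Φ := Abelianization.of.comp R.subtype
  have hab : Surjective ab := by
    rw [← MonoidHom.range_eq_top, MonoidHom.range_comp, range_subtype,
      ← map_comap_eq_self_of_surjective hof (map _ R), comap_map_eq, Abelianization.ker_of, hR,
      map_top_of_surjective _ hof]
  have hker : ab.ker ≤ d.ker := by
    intro r hr
    obtain ⟨r', hr', hrr'⟩ := hd ⟨r.2, Abelianization.ker_of Φ ▸ hr⟩
    rwa [Subtype.ext hrr'] at hr'
  obtain ⟨D, hD⟩ := MonoidHom.exists_comp_eq_of_ker_le hab d hker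
  exact ⟨D.comp Abelianization.of, hD⟩

def MonoidHom.invMulOfCentral {G E : Type*} [Group G] [Group E] (f g : G →* E) (K : Subgroup E)
    (hK : K ≤ center E) (h : ∀ x, (f x)⁻¹ * g x ∈ K) : G →* K :=
  MonoidHom.mk' (fun x ↦ ⟨(f x)⁻¹ * g x, h x⟩) fun x y ↦ Subtype.ext <| by
    have hc := mem_center_iff.mp (hK (h x)) (f y)⁻¹
    simp only [map_mul, mul_inv_rev, MulMemClass.mk_mul_mk]
    calc (f y)⁻¹ * (f x)⁻¹ * (g x * g y) = (f y)⁻¹ * ((f x)⁻¹ * g x) * g y := by group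
      _ = (f x)⁻¹ * g x * ((f y)⁻¹ * g y) := by rw [hc]; group

theorem exists_extension_of_central_defect {E : Type*} [Group E] {R : Subgroup Φ} [hR : R.Normal]
    (hperf : R ⊔ commutator Φ = ⊤) (hHopf : R ⊓ commutator Φ ≤ ⁅(⊤ : Subgroup Φ), R⁆)
    {K : Subgroup E} (hK : K ≤ center E) (τ : Φ →* E) (t : R →* E)
    (hτt : ∀ r : R, (τ r)⁻¹ * t r ∈ K)
    (hconj : ∀ (u : Φ) (r : R), t ⟨u * r * u⁻¹, hR.conj_mem r r.2 u⟩ = τ u * t r * (τ u)⁻¹) :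
    ∃ τ' : Φ →* E, (∀ w, (τ w)⁻¹ * τ' w ∈ K) ∧ ∀ r : R, τ' r = t r := by
  let _ : CommGroup K := { mul_comm := fun a b ↦ Subtype.ext (mem_center_iff.mp (hK b.2) a) }
  let d := (τ.comp R.subtype).invMulOfCentral t K hK hτt
  have hd : ∀ (u : Φ) (r : R), d ⟨u * r * u⁻¹, hR.conj_mem r r.2 u⟩ = d r := by
    intro u r
    have hc : τ u * ((τ r)⁻¹ * t r) = (τ r)⁻¹ * t r * τ u := mem_center_iff.mp (hK (hτt r)) (τ u)
    apply Subtype.ext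
    change (τ (u * r * u⁻¹))⁻¹ * t ⟨_, _⟩ = (τ r)⁻¹ * t r
    rw [hconj, map_mul, map_mul, map_inv]
    calc (τ u * τ r * (τ u)⁻¹)⁻¹ * (τ u * t r * (τ u)⁻¹) = τ u * ((τ r)⁻¹ * t r) * (τ u)⁻¹ := by
          group
      _ = (τ r)⁻¹ * t r := by rw [hc]; group
  obtain ⟨D, hD⟩ := exists_extension_of_sup_commutator_eq_top hperf d
    (hHopf.trans (commutator_top_le_map_subtype_ker R d hd))
  -- `τ' = τ * D`, a homomorphism because `D` is central
  refine ⟨(τ.noncommCoprod (K.subtype.comp D) fun w v ↦ mem_center_iff.mp (hK (D v).2) (τ w)).comp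
    ((MonoidHom.id Φ).prod (MonoidHom.id Φ)), fun w ↦ ?_, fun r ↦ ?_⟩
  · change (τ w)⁻¹ * (τ w * D w) ∈ K
    rw [inv_mul_cancel_left]
    exact (D w).2
  · change τ r * D r = t r
    rw [hD r]
    exact mul_inv_cancel_left _ _

theorem exists_section_extending {H E ι : Type*} [Group H] [Group E]
    {π : FreeGroup ι →* H} (hπ : Surjective π) {N : Subgroup H} [hN : N.Normal]
    (hperf : N.comap π ⊔ commutator (FreeGroup ι) = ⊤)
    (hHopf : N.comap π ⊓ commutator (FreeGroup ι) ≤ ⁅(⊤ : Subgroup (FreeGroup ι)), N.comap π⁆)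
    {q : E →* H} (hq : Surjective q) (hcentral : q.ker ≤ center E)
    (s : N →* E) (hs : ∀ n, q (s n) = n)
    (hconj : ∀ (e : E) (n : N), s ⟨q e * n * (q e)⁻¹, hN.conj_mem n n.2 (q e)⟩ = e * s n * e⁻¹) :
    ∃ σ : H →* E, (∀ x, q (σ x) = x) ∧ ∀ n : N, σ n = s n := by
  obtain ⟨τ, hτ⟩ : ∃ τ : FreeGroup ι →* E, ∀ w, q (τ w) = π w :=
    ⟨_, DFunLike.congr_fun <| FreeGroup.ext_hom (q.comp (FreeGroup.lift
      fun i ↦ surjInv hq (π (.of i)))) π fun i ↦ by simp [surjInv_eq hq]⟩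
  obtain ⟨τ', hττ', hτ'⟩ := exists_extension_of_central_defect hperf hHopf hcentral τ
    (s.comp (π.subgroupComap N))
    (fun r ↦ by
      simp only [MonoidHom.mem_ker, map_mul, map_inv, MonoidHom.comp_apply, hs, hτ]
      exact inv_mul_cancel _)
    (fun u r ↦ by
      rw [MonoidHom.comp_apply, MonoidHom.comp_apply, ← hconj]
      refine congrArg s (Subtype.ext ?_)
      change π (u * r * u⁻¹) = q (τ u) * π r * (q (τ u))⁻¹
      simp [hτ])
  have hqτ' : ∀ w, q (τ' w) = π w := fun w ↦ by
    have := MonoidHom.mem_ker.mp (hττ' w)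
    rwa [map_mul, map_inv, hτ, inv_mul_eq_one, eq_comm] at this
  have hker : π.ker ≤ τ'.ker := fun w hw ↦ by
    have hwR : w ∈ N.comap π := by simp_all
    rw [MonoidHom.mem_ker, show w = ((⟨w, hwR⟩ : N.comap π) : FreeGroup ι) from rfl, hτ',
      MonoidHom.comp_apply, show π.subgroupComap N ⟨w, hwR⟩ = 1 from Subtype.ext hw, map_one]
  obtain ⟨σ, hσ⟩ := MonoidHom.exists_comp_eq_of_ker_le hπ τ' hker
  refine ⟨σ, fun x ↦ ?_, fun n ↦ ?_⟩
  · obtain ⟨w, rfl⟩ := hπ x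
    rw [hσ, hqτ']
  · obtain ⟨w, hw⟩ := hπ n
    rw [← hw, hσ, hτ' ⟨w, by simp [hw]⟩]
    exact congrArg s (Subtype.ext hw)

end CentralExtensions

section CommutingSubgroups

variable {H G : Type*} [Group H] [Group G] {A B : Subgroup G}
  (hAB : ∀ (a : A) (b : B), Commute (a : G) b) (D : H →* G)

def mulPullback : Subgroup (H × (A × B)) :=
  (D.comp (MonoidHom.fst _ _)).eqLocus
    ((A.subtype.noncommCoprod B.subtype hAB).comp (MonoidHom.snd _ _))

theorem mem_mulPullback {z : H × (A × B)} : z ∈ mulPullback hAB D ↔ D z.1 = z.2.1 * z.2.2 :=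
  Iff.rfl

theorem ker_fst_mulPullback_le_center :
    ((MonoidHom.fst _ _).comp (mulPullback hAB D).subtype).ker ≤ center (mulPullback hAB D) := by
  rintro ⟨⟨x, a, b⟩, hab⟩ (rfl : x = 1)
  have hab : (a : G) * b = 1 := ((mem_mulPullback hAB D).mp hab).symm.trans (map_one D)
  rw [mem_center_iff]
  rintro ⟨⟨x', a', b'⟩, -⟩
  refine Subtype.ext (Prod.ext (by simp) (Prod.ext (Subtype.ext ?_) (Subtype.ext ?_)))
  · change (a' : G) * a = a * a'
    rw [eq_inv_of_mul_eq_one_left hab]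
    exact (hAB a' b).inv_right
  · change (b' : G) * b = b * b'
    rw [eq_inv_of_mul_eq_one_right hab]
    exact (hAB a b').inv_left.symm

end CommutingSubgroups

section FibreProduct

variable {H Q : Type*} [Group H] [Group Q] (p : H →* Q)

def fibreProduct : Subgroup (H × H) :=
  (p.comp (MonoidHom.fst H H)).eqLocus (p.comp (MonoidHom.snd H H))

namespace fibreProduct

theorem mem_iff {z : H × H} : z ∈ fibreProduct p ↔ p z.1 = p z.2 := Iff.rfl

def diag : H →* fibreProduct p :=
  ((MonoidHom.id H).prod (MonoidHom.id H)).codRestrict _ fun _ ↦ rfl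

def inl : p.ker →* fibreProduct p :=
  ((MonoidHom.inl H H).comp p.ker.subtype).codRestrict _ fun n ↦ by
    simp [mem_iff, MonoidHom.mem_ker.mp n.2]

def inr : p.ker →* fibreProduct p :=
  ((MonoidHom.inr H H).comp p.ker.subtype).codRestrict _ fun n ↦ by
    simp [mem_iff, MonoidHom.mem_ker.mp n.2]

@[simp] theorem coe_diag (x : H) : (diag p x : H × H) = (x, x) := rfl

@[simp] theorem coe_inl (n : p.ker) : (inl p n : H × H) = ((n : H), 1) := rfl

@[simp] theorem coe_inr (n : p.ker) : (inr p n : H × H) = (1, (n : H)) := rfl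

theorem diag_eq_inl_mul_inr (n : p.ker) : diag p n = inl p n * inr p n :=
  Subtype.ext (by simp)

theorem commute_inl_inr (m n : p.ker) : Commute (inl p m) (inr p n) :=
  Subtype.ext (by simp)

theorem inl_conj (x : H) (n : p.ker) :
    inl p ⟨x * n * x⁻¹, p.normal_ker.conj_mem n n.2 x⟩ = diag p x * inl p n * (diag p x)⁻¹ :=
  Subtype.ext (by simp [mul_assoc])

theorem inr_conj (x : H) (n : p.ker) :
    inr p ⟨x * n * x⁻¹, p.normal_ker.conj_mem n n.2 x⟩ = diag p x * inr p n * (diag p x)⁻¹ :=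
  Subtype.ext (by simp [mul_assoc])

theorem eq_diag_mul_inr (z : fibreProduct p) :
    z = diag p z.1.1 * inr p ⟨z.1.1⁻¹ * z.1.2, by simp [(mem_iff p).mp z.2]⟩ :=
  Subtype.ext (by simp)

variable {F : Type*} [Group F] {p} (φ : fibreProduct p →* F)

theorem commute_range_inl_range_inr (a : (φ.comp (inl p)).range)
    (b : (φ.comp (inr p)).range) : Commute (a : F) b := by
  obtain ⟨_, m, rfl⟩ := a
  obtain ⟨_, n, rfl⟩ := b
  exact (commute_inl_inr p m n).map φ

abbrev centralExtension :
    Subgroup (H × ((φ.comp (inl p)).range × (φ.comp (inr p)).range)) :=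
  mulPullback (commute_range_inl_range_inr φ) (φ.comp (diag p))

abbrev proj : centralExtension φ →* H := (MonoidHom.fst _ _).comp (centralExtension φ).subtype

def fstComponent : centralExtension φ →* F :=
  (Subgroup.subtype _).comp
    ((MonoidHom.fst _ _).comp ((MonoidHom.snd _ _).comp (Subgroup.subtype _)))

def sndComponent : centralExtension φ →* F :=
  (Subgroup.subtype _).comp
    ((MonoidHom.snd _ _).comp ((MonoidHom.snd _ _).comp (Subgroup.subtype _)))

theorem fstComponent_mul_sndComponent (e : centralExtension φ) :
    fstComponent φ e * sndComponent φ e = φ (diag p (proj φ e)) :=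
  e.2.symm

theorem map_diag_eq_mul (n : p.ker) : φ (diag p n) = φ (inl p n) * φ (inr p n) := by
  rw [diag_eq_inl_mul_inr, map_mul]

def sectionOverKer : p.ker →* centralExtension φ :=
  MonoidHom.codRestrict
    (p.ker.subtype.prod ((φ.comp (inl p)).rangeRestrict.prod (φ.comp (inr p)).rangeRestrict))
    _ (map_diag_eq_mul φ)

theorem proj_surjective (hp : Surjective p)
    (hQ : ∀ (F : Type*) [Group F] [Finite F] (φ : Q →* F), φ = 1) [Finite F] :
    Surjective (proj φ) := by
  set D := φ.comp (diag p)
  set m := (φ.comp (inl p)).range.subtype.noncommCoprod (φ.comp (inr p)).range.subtype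
    (commute_range_inl_range_inr φ)
  have : (m.range.comap D).FiniteIndex := finiteIndex_of_le (H := D.ker) fun x hx ↦
    (MonoidHom.mem_ker.mp hx ▸ one_mem _ : D x ∈ m.range)
  have hDm := eq_top_of_ker_le hQ hp (m.range.comap D) fun n hn ↦
    ⟨((φ.comp (inl p)).rangeRestrict ⟨n, hn⟩, (φ.comp (inr p)).rangeRestrict ⟨n, hn⟩),
      (map_diag_eq_mul φ ⟨n, hn⟩).symm⟩
  intro x
  obtain ⟨ab, hab⟩ : D x ∈ m.range := by rw [← mem_comap, hDm]; trivial
  exact ⟨⟨(x, ab), hab.symm⟩, rfl⟩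

theorem sectionOverKer_conj (e : centralExtension φ) (n : p.ker) :
    sectionOverKer φ ⟨proj φ e * n * (proj φ e)⁻¹, p.normal_ker.conj_mem n n.2 (proj φ e)⟩ =
      e * sectionOverKer φ n * e⁻¹ := by
  obtain ⟨⟨x, a, b⟩, he⟩ := e
  have he : φ (diag p x) = a * b := he
  refine Subtype.ext (Prod.ext rfl (Prod.ext (Subtype.ext ?_) (Subtype.ext ?_)))
  · have hc : Commute (b : F) (φ (inl p n)) := (commute_range_inl_range_inr φ ⟨_, n, rfl⟩ b).symm
    calc φ (inl p ⟨x * n * x⁻¹, _⟩) = φ (diag p x) * φ (inl p n) * (φ (diag p x))⁻¹ := by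
          rw [inl_conj, map_mul, map_mul, map_inv]
      _ = a * ((b : F) * φ (inl p n) * (b : F)⁻¹) * (a : F)⁻¹ := by rw [he]; group
      _ = a * φ (inl p n) * (a : F)⁻¹ := by rw [hc.mul_inv_cancel]
  · have hc : Commute (a : F) (b * φ (inr p n) * (b : F)⁻¹) := commute_range_inl_range_inr φ a
      ⟨_, mul_mem (mul_mem b.2 ⟨n, rfl⟩) (inv_mem b.2)⟩
    calc φ (inr p ⟨x * n * x⁻¹, _⟩) = φ (diag p x) * φ (inr p n) * (φ (diag p x))⁻¹ := by
          rw [inr_conj, map_mul, map_mul, map_inv]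
      _ = a * ((b : F) * φ (inr p n) * (b : F)⁻¹) * (a : F)⁻¹ := by rw [he]; group
      _ = b * φ (inr p n) * (b : F)⁻¹ := hc.mul_inv_cancel

theorem exists_lift {ι : Type*} {π : FreeGroup ι →* H} (hπ : Surjective π) (hp : Surjective p)
    (hperf : commutator Q = ⊤)
    (hHopf : (p.comp π).ker ⊓ commutator (FreeGroup ι) ≤
      ⁅(⊤ : Subgroup (FreeGroup ι)), (p.comp π).ker⁆)
    (hQ : ∀ (F : Type*) [Group F] [Finite F] (φ : Q →* F), φ = 1) [Finite F] :
    ∃ a b : H →* F, (∀ x y, Commute (a x) (b y)) ∧ (∀ x, a x * b x = φ (diag p x)) ∧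
      ∀ n : p.ker, b n = φ (inr p n) := by
  obtain ⟨σ, hσ, hσN⟩ := exists_section_extending hπ (N := p.ker)
    (by rw [MonoidHom.comap_ker]; exact sup_commutator_eq_top_of_surjective (hp.comp hπ) hperf)
    (by rwa [MonoidHom.comap_ker]) (proj_surjective φ hp hQ)
    (ker_fst_mulPullback_le_center _ _) (sectionOverKer φ) (fun _ ↦ rfl) (sectionOverKer_conj φ)
  refine ⟨(fstComponent φ).comp σ, (sndComponent φ).comp σ,
    fun x y ↦ commute_range_inl_range_inr φ _ _, fun x ↦ ?_, fun n ↦ ?_⟩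
  · rw [MonoidHom.comp_apply, MonoidHom.comp_apply, fstComponent_mul_sndComponent, hσ]
  · rw [MonoidHom.comp_apply, hσN n]
    rfl

theorem noncommCoprod_comp_subtype {a b : H →* F} (hab : ∀ x y, Commute (a x) (b y))
    (hdiag : ∀ x, a x * b x = φ (diag p x)) (hb : ∀ n : p.ker, b n = φ (inr p n)) :
    (a.noncommCoprod b hab).comp (fibreProduct p).subtype = φ := by
  ext z
  change a (z : H × H).1 * b (z : H × H).2 = φ z
  conv_rhs => rw [eq_diag_mul_inr p z, map_mul, ← hdiag, ← hb]
  change _ = a _ * b _ * b (_ * _)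
  rw [mul_assoc, ← map_mul, mul_inv_cancel_left]

theorem restrict_surjective {ι : Type*} {π : FreeGroup ι →* H} (hπ : Surjective π)
    (hp : Surjective p) (hperf : commutator Q = ⊤)
    (hHopf : (p.comp π).ker ⊓ commutator (FreeGroup ι) ≤
      ⁅(⊤ : Subgroup (FreeGroup ι)), (p.comp π).ker⁆)
    (hQ : ∀ (F : Type*) [Group F] [Finite F] (φ : Q →* F), φ = 1) [Finite F] :
    Surjective fun f : H × H →* F ↦ f.comp (fibreProduct p).subtype := fun φ ↦ by
  obtain ⟨a, b, hab, hdiag, hb⟩ := exists_lift φ hπ hp hperf hHopf hQ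
  exact ⟨_, noncommCoprod_comp_subtype φ hab hdiag hb⟩

theorem restrict_injective (hp : Surjective p)
    (hQ : ∀ (F : Type*) [Group F] [Finite F] (φ : Q →* F), φ = 1) [Finite F] :
    Injective fun f : H × H →* F ↦ f.comp (fibreProduct p).subtype := by
  intro f g hfg
  have hl : f.comp (MonoidHom.inl H H) = g.comp (MonoidHom.inl H H) :=
    MonoidHom.eq_of_eqOn_ker hQ hp fun n hn ↦ DFunLike.congr_fun hfg (inl p ⟨n, hn⟩)
  have hr : f.comp (MonoidHom.inr H H) = g.comp (MonoidHom.inr H H) :=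
    MonoidHom.eq_of_eqOn_ker hQ hp fun n hn ↦ DFunLike.congr_fun hfg (inr p ⟨n, hn⟩)
  rw [← f.noncommCoprod_unique, ← g.noncommCoprod_unique]
  simp only [hl, hr]

end fibreProduct

end FibreProduct

-- `hH2` is `H₂(Q, ℤ) = 0` via Hopf's formula `H₂(Q, ℤ) ≅ (R ⊓ [Φ, Φ]) / [Φ, R]`, `Q = Φ ⧸ R`.
theorem stmt_7_general {H : Type*} {Q : Type u} [Group H] [Group Q]
    [Group.FG H] [Group.FG Q]
    (p : H →* Q) (hp : Function.Surjective p)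
    (hH2 : ∀ (ι : Type u) (π : FreeGroup ι →* Q), Function.Surjective π →
      π.ker ⊓ commutator (FreeGroup ι) ≤ ⁅(⊤ : Subgroup (FreeGroup ι)), π.ker⁆)
    (hQhat : ∀ (F : Type v) [Group F] [Finite F] (φ : Q →* F), φ = 1)
    (P : Subgroup (H × H))
    (hP : P = MonoidHom.eqLocus (p.comp (MonoidHom.fst H H)) (p.comp (MonoidHom.snd H H))) :
    ∀ (F : Type w) [Group F] [Finite F],
      Function.Bijective (fun f : (H × H) →* F => f.comp P.subtype) := by
  intro F _ _
  subst hP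
  obtain ⟨α, _, π, hπ⟩ := Group.fg_iff_exists_freeGroup_hom_surjective_finite.mp ‹Group.FG H›
  let π' := π.comp (FreeGroup.freeGroupCongr Equiv.ulift.{u}).toMonoidHom
  have hπ' : Surjective π' := hπ.comp (MulEquiv.surjective _)
  exact ⟨fibreProduct.restrict_injective hp hQhat, fibreProduct.restrict_surjective hπ' hp
    (commutator_eq_top_of_forall_finite hQhat) (hH2 _ _ (hp.comp hπ')) hQhat⟩

/-- Platonov–Tavgen criterion: Let `1 → N → H → Q → 1` be exact with
`N`, `H`, `Q` finitely generated, and let `P ≤ H × H` be the fibre product. If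
`H₂(Q,ℤ) = 0` (expressed via Hopf's formula: for every free presentation
`R = ker(F → Q)` one has `R ∩ [F,F] ≤ [F,R]`) and `Q` has no nontrivial finite
quotients, then for every finite group `F` restriction `Hom(H × H, F) → Hom(P, F)`
is a bijection (i.e. `P ↪ H × H` induces an isomorphism of profinite completions). -/
theorem stmt_7 {H : Type*} {Q : Type u} [Group H] [Group Q]
    [Group.FG H] [Group.FG Q]
    (p : H →* Q) (hp : Function.Surjective p)
    (N : Subgroup H) (hN : p.ker = N) (hNfg : Group.FG N)
    (hH2 : ∀ (ι : Type u) (π : FreeGroup ι →* Q), Function.Surjective π →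
      π.ker ⊓ commutator (FreeGroup ι) ≤ ⁅(⊤ : Subgroup (FreeGroup ι)), π.ker⁆)
    (hQhat : ∀ (F : Type v) [Group F] [Finite F] (φ : Q →* F), φ = 1)
    (P : Subgroup (H × H))
    (hP : P = MonoidHom.eqLocus (p.comp (MonoidHom.fst H H)) (p.comp (MonoidHom.snd H H))) :
    ∀ (F : Type w) [Group F] [Finite F],
      Function.Bijective (fun f : (H × H) →* F => f.comp P.subtype) :=
  stmt_7_general p hp hH2 hQhat P hP
end

section
/- (0-1-2 Lemma.) Let p : H → Q be a surjective group homomorphism where H is finitely generated and Q is finitely presented, and let P ≤ H × H be the associated fibre product. Then P is finitely generated. -/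
/-!
Present `Q = F ⧸ ⟪R⟫` with `F` free of finite rank and `R` finite, lift the basis of `F` to
`σ : F →* H` over `p`, and choose a finite generating set `S` of `H` and words `w s ∈ F` with
`π (w s) = p s`. Modulo `K = ⟪σ R ∪ {s σ(w s)⁻¹ | s ∈ S}⟫` the map `σ` kills `⟪R⟫`, so it descends
to `Q →* H ⧸ K`; composed with `p` this is the projection (check on `S`), hence `ker p = K` is
the normal closure of a finite set `T`.

The fibre product contains the diagonal, `(h₁, h₂) = (h₁ h₂⁻¹, 1) (h₂, h₂)`, and conjugating
`(n, 1)` by `(g, g)` gives `(g n g⁻¹, 1)`; so it is generated by the diagonal copy of `S`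
together with `T × 1`.
-/

open Function Subgroup

theorem FinitelyPresentedGroup.isFinitelyPresented {Q : Type*} [Group Q]
    (hQ : FinitelyPresentedGroup Q) : Group.IsFinitelyPresented Q :=
  let ⟨n, rels, π, hπ, hker⟩ := hQ
  ⟨n, π, hπ, rels, rels.finite_toSet, hker.symm⟩

namespace Subgroup

variable {H : Type*} [Group H]

theorem mem_closure_image_diag {S : Set H} (hS : closure S = ⊤) (h : H) :
    (h, h) ∈ closure (Function.diag '' S) := by
  change _ ∈ closure ((MonoidHom.id H).prod (MonoidHom.id H) '' S)
  rw [← MonoidHom.map_closure, hS]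
  exact ⟨h, mem_top h, rfl⟩

theorem normal_comap_inl_of_diag_mem {L : Subgroup (H × H)} (hL : ∀ h, (h, h) ∈ L) :
    (L.comap (MonoidHom.inl H H)).Normal where
  conj_mem n hn g := by
    simpa using L.mul_mem (L.mul_mem (hL g) hn) (L.inv_mem (hL g))

end Subgroup

namespace MonoidHom

variable {F H Q : Type*} [Group F] [Group H] [Group Q]

theorem ker_le_of_comp_eq_mk' {p : H →* Q} {K : Subgroup H} [K.Normal] {q : Q →* H ⧸ K}
    (hq : q.comp p = QuotientGroup.mk' K) : p.ker ≤ K := by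
  simpa only [← QuotientGroup.ker_mk' K, ← hq, ← comap_ker] using p.ker_le_comap q.ker

theorem ker_eq_normalClosure_of_comp_eq {π : F →* Q} (hπ : Surjective π) {R : Set F}
    (hR : π.ker = normalClosure R) {p : H →* Q} {σ : F →* H} (hσ : p.comp σ = π)
    {S : Set H} (hS : closure S = ⊤) {w : H → F} (hw : ∀ s ∈ S, π (w s) = p s) :
    p.ker = normalClosure (σ '' R ∪ (fun s => s * (σ (w s))⁻¹) '' S) := by
  set K := normalClosure (σ '' R ∪ (fun s => s * (σ (w s))⁻¹) '' S)
  have hpσ : ∀ x, p (σ x) = π x := fun x => DFunLike.congr_fun hσ x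
  have hgen : σ '' R ∪ (fun s => s * (σ (w s))⁻¹) '' S ⊆ p.ker := by
    rintro _ (⟨r, hr, rfl⟩ | ⟨s, hs, rfl⟩)
    · rw [SetLike.mem_coe, mem_ker, hpσ, ← mem_ker, hR]
      exact subset_normalClosure hr
    · rw [SetLike.mem_coe, mem_ker, map_mul, map_inv, hpσ, hw s hs, mul_inv_cancel]
  refine le_antisymm ?_ (normalClosure_le_normal hgen)
  have hπK : π.ker ≤ ((QuotientGroup.mk' K).comp σ).ker := by
    rw [hR]
    refine normalClosure_le_normal fun r hr => ?_
    rw [SetLike.mem_coe, mem_ker, comp_apply, QuotientGroup.mk'_apply, QuotientGroup.eq_one_iff]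
    exact subset_normalClosure (.inl ⟨r, hr, rfl⟩)
  let q : Q →* H ⧸ K := π.liftOfRightInverse (surjInv hπ) (rightInverse_surjInv hπ) ⟨_, hπK⟩
  have hq : ∀ x, q (π x) = σ x :=
    π.liftOfRightInverse_comp_apply _ (rightInverse_surjInv hπ) ⟨_, hπK⟩
  refine ker_le_of_comp_eq_mk' (q := q) (eq_of_eqOn_dense hS fun s hs => ?_)
  rw [comp_apply, ← hw s hs, hq, QuotientGroup.mk'_apply, eq_comm, QuotientGroup.eq_iff_div_mem,
    div_eq_mul_inv]
  exact subset_normalClosure (.inr ⟨s, hs, rfl⟩)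

theorem ker_isFinitelyNormallyGenerated [Group.FG H] [Group.IsFinitelyPresented Q]
    {p : H →* Q} (hp : Surjective p) : p.ker.IsFinitelyNormallyGenerated := by
  obtain ⟨n, π, hπ, R, hRfin, hR⟩ := ‹Group.IsFinitelyPresented Q›
  obtain ⟨S, hS, hSfin⟩ := Group.fg_iff.mp ‹Group.FG H›
  let σ : FreeGroup (Fin n) →* H := FreeGroup.lift fun i => surjInv hp (π (.of i))
  have hσ : p.comp σ = π := FreeGroup.ext_hom _ _ fun i => by simp [σ, surjInv_eq hp]
  exact ⟨_, (hRfin.image σ).union (hSfin.image _),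
    (ker_eq_normalClosure_of_comp_eq hπ hR.symm hσ hS fun s _ => surjInv_eq hπ (p s)).symm⟩

theorem eqLocus_fst_snd_le {p : H →* Q} {L : Subgroup (H × H)} (hL : ∀ h, (h, h) ∈ L)
    (hker : p.ker ≤ L.comap (inl H H)) : eqLocus (p.comp (fst H H)) (p.comp (snd H H)) ≤ L := by
  rintro ⟨h₁, h₂⟩ (hh : p h₁ = p h₂)
  have hk : h₁ * h₂⁻¹ ∈ p.ker := by rw [mem_ker, map_mul, map_inv, hh, mul_inv_cancel]
  simpa using L.mul_mem (hker hk) (hL h₂)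

theorem eqLocus_fst_snd_eq_closure (p : H →* Q) {S T : Set H} (hS : closure S = ⊤)
    (hT : normalClosure T = p.ker) :
    eqLocus (p.comp (fst H H)) (p.comp (snd H H)) =
      closure (Function.diag '' S ∪ inl H H '' T) := by
  have hdiag h : (h, h) ∈ closure (Function.diag '' S ∪ inl H H '' T) :=
    closure_mono Set.subset_union_left (mem_closure_image_diag hS h)
  refine le_antisymm (eqLocus_fst_snd_le hdiag ?_) (closure_le _ |>.mpr ?_)
  · have := normal_comap_inl_of_diag_mem hdiag
    exact hT ▸ normalClosure_le_normal fun n hn => subset_closure (.inr ⟨n, hn, rfl⟩)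
  · rintro _ (⟨h, -, rfl⟩ | ⟨n, hn, rfl⟩)
    · rfl
    · show p n = p 1
      rw [map_one, ← mem_ker, ← hT]
      exact subset_normalClosure hn

theorem fg_eqLocus_fst_snd [Group.FG H] [Group.IsFinitelyPresented Q] {p : H →* Q}
    (hp : Surjective p) : (eqLocus (p.comp (fst H H)) (p.comp (snd H H))).FG := by
  obtain ⟨S, hS, hSfin⟩ := Group.fg_iff.mp ‹Group.FG H›
  obtain ⟨T, hTfin, hT⟩ := ker_isFinitelyNormallyGenerated hp
  rw [eqLocus_fst_snd_eq_closure p hS hT]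
  exact fg_iff _ |>.mpr ⟨_, rfl, (hSfin.image _).union (hTfin.image _)⟩

end MonoidHom

/-- 0-1-2 Lemma: If `p : H → Q` is surjective, `H` is finitely
generated and `Q` is finitely presented, then the fibre product `P ≤ H × H` is
finitely generated. -/
theorem stmt_15 {H Q : Type*} [Group H] [Group Q] [Group.FG H]
    (hQ : FinitelyPresentedGroup Q)
    (p : H →* Q) (hp : Function.Surjective p)
    (P : Subgroup (H × H))
    (hP : P = MonoidHom.eqLocus (p.comp (MonoidHom.fst H H)) (p.comp (MonoidHom.snd H H))) :
    Group.FG P := by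
  subst hP
  have := hQ.isFinitelyPresented
  exact (Group.fg_iff_subgroup_fg _).mpr (MonoidHom.fg_eqLocus_fst_snd hp)
end

section
/- Every topologically finitely generated profinite group is Hopfian: if G is a compact, Hausdorff, totally disconnected topological group such that there is a finite subset whose generated subgroup is dense in G, then every continuous surjective group homomorphism φ : G → G is injective. -/
/-!
A continuous homomorphism to a finite discrete group is determined by its values on a finite
topological generating set, so there are only finitely many of them. Precomposition with a
surjective `φ` is injective on this finite set, hence bijective; so every such homomorphism
factors through `φ` and its kernel contains `ker φ`. In a profinite group the kernels of the
quotient maps by open normal subgroups intersect trivially, so `ker φ = ⊥`.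
-/

open Function

namespace ContinuousMonoidHom

variable {G H Q : Type*} [Group G] [TopologicalSpace G] [Group H] [TopologicalSpace H]
  [Group Q] [TopologicalSpace Q]

theorem finite_of_dense_closure [T2Space Q] [Finite Q] {T : Set G} (hT : T.Finite)
    (hdense : Dense (Subgroup.closure T : Set G)) : Finite (G →ₜ* Q) := by
  have : Finite T := hT
  refine Finite.of_injective (fun ψ : G →ₜ* Q => fun t : T => ψ t) fun ψ₁ ψ₂ h => ?_
  have heq : Set.EqOn ψ₁ ψ₂ (Subgroup.closure T : Set G) :=
    MonoidHom.eqOn_closure (f := (ψ₁ : G →* Q)) (g := ψ₂) fun t ht => congrFun h ⟨t, ht⟩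
  exact ext <| congrFun <| Continuous.ext_on hdense ψ₁.continuous ψ₂.continuous heq

theorem comp_injective_of_surjective {φ : G →ₜ* H} (hφ : Surjective φ) :
    Injective fun ψ : H →ₜ* Q => ψ.comp φ := fun _ _ h =>
  ext <| hφ.forall.mpr fun g => DFunLike.congr_fun h g

theorem ker_le_ker_of_surjective [Finite (G →ₜ* Q)] {φ : G →ₜ* G} (hφ : Surjective φ)
    (f : G →ₜ* Q) : φ.toMonoidHom.ker ≤ f.toMonoidHom.ker := by
  obtain ⟨ψ, rfl⟩ := Finite.surjective_of_injective (comp_injective_of_surjective (Q := Q) hφ) f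
  intro x hx
  exact (congrArg ψ hx).trans (map_one ψ)

end ContinuousMonoidHom

theorem ProfiniteGrp.exists_openNormalSubgroup_notMem {G : Type*} [Group G] [TopologicalSpace G]
    [IsTopologicalGroup G] [CompactSpace G] [T1Space G] [TotallyDisconnectedSpace G] {x : G}
    (hx : x ≠ 1) : ∃ N : OpenNormalSubgroup G, x ∉ N := by
  obtain ⟨N, hN⟩ := exist_openNormalSubgroup_sub_open_nhds_of_one isOpen_compl_singleton hx.symm
  exact ⟨N, fun h => hN h rfl⟩

/-- Every topologically finitely generated profinite group is Hopfian:
if `G` is a compact, Hausdorff, totally disconnected topological group with a finite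
subset generating a dense subgroup, then every continuous surjective homomorphism
`φ : G → G` is injective. -/
theorem stmt_16 {G : Type*} [Group G] [TopologicalSpace G] [IsTopologicalGroup G]
    [CompactSpace G] [T2Space G] [TotallyDisconnectedSpace G]
    (hfg : ∃ T : Finset G, Dense ((Subgroup.closure (T : Set G) : Subgroup G) : Set G))
    (φ : G →* G) (hcont : Continuous φ) (hsurj : Function.Surjective φ) :
    Function.Injective φ := by
  obtain ⟨T, hT⟩ := hfg
  rw [← MonoidHom.ker_eq_bot_iff, Subgroup.eq_bot_iff_forall]
  intro x hx
  by_contra hx1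
  obtain ⟨N, hxN⟩ := ProfiniteGrp.exists_openNormalSubgroup_notMem hx1
  have : DiscreteTopology (G ⧸ (N : Subgroup G)) :=
    QuotientGroup.discreteTopology N.toOpenSubgroup.isOpen
  have : Finite (G ⧸ (N : Subgroup G)) :=
    Subgroup.quotient_finite_of_isOpen _ N.toOpenSubgroup.isOpen
  have : Finite (G →ₜ* G ⧸ (N : Subgroup G)) :=
    ContinuousMonoidHom.finite_of_dense_closure T.finite_toSet hT
  have hker := ContinuousMonoidHom.ker_le_ker_of_surjective (φ := ⟨φ, hcont⟩) hsurj
    ⟨QuotientGroup.mk' (N : Subgroup G), continuous_quotient_mk'⟩ hx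
  exact hxN ((QuotientGroup.eq_one_iff x).mp hker)
end

section
/- The Higman group J, presented by generators a₁, a₂, a₃, a₄ subject to the relations a₂⁻¹a₁a₂ = a₁², a₃⁻¹a₂a₃ = a₂², a₄⁻¹a₃a₄ = a₃², a₁⁻¹a₄a₁ = a₄², has no nontrivial finite quotients: every homomorphism from J to a finite group is trivial. -/
/-- The four relators `aⱼ⁻¹ aᵢ aⱼ aᵢ⁻²` of Higman's group, for
`(i,j) ∈ {(0,1), (1,2), (2,3), (3,0)}`. -/
def higmanRels : Set (FreeGroup (Fin 4)) :=
  { (FreeGroup.of 1)⁻¹ * FreeGroup.of 0 * FreeGroup.of 1 * (FreeGroup.of 0)⁻¹ *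
      (FreeGroup.of 0)⁻¹,
    (FreeGroup.of 2)⁻¹ * FreeGroup.of 1 * FreeGroup.of 2 * (FreeGroup.of 1)⁻¹ *
      (FreeGroup.of 1)⁻¹,
    (FreeGroup.of 3)⁻¹ * FreeGroup.of 2 * FreeGroup.of 3 * (FreeGroup.of 2)⁻¹ *
      (FreeGroup.of 2)⁻¹,
    (FreeGroup.of 0)⁻¹ * FreeGroup.of 3 * FreeGroup.of 0 * (FreeGroup.of 3)⁻¹ *
      (FreeGroup.of 3)⁻¹ }

/-- Higman's group `⟨a₁,a₂,a₃,a₄ ∣ a₂⁻¹a₁a₂ = a₁², a₃⁻¹a₂a₃ = a₂², a₄⁻¹a₃a₄ = a₃²,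
a₁⁻¹a₄a₁ = a₄²⟩`, as the quotient of the free group on four generators by the normal
closure of the four relators. -/
abbrev HigmanGroup : Type := PresentedGroup higmanRels

/-!
If `y⁻¹ x y = x²` in a group, conjugating `ord y` times gives `x^(2^(ord y)) = x`, so
`ord x ∣ 2^(ord y) - 1`. Let `p` be the least prime dividing one of the orders `ord aᵢ` of the
generators' images, say `p ∣ ord aᵢ ∣ 2^(ord aᵢ₊₁) - 1`. The multiplicative order of `2` mod `p`
is a nontrivial divisor of both `ord aᵢ₊₁` and `p - 1`, so `ord aᵢ₊₁` has a prime factor smaller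
than `p`, contradicting minimality. Hence every `ord aᵢ` is `1`.
-/

lemma ZMod.exists_prime_dvd_lt_of_pow_eq_one {p n : ℕ} [Fact p.Prime] {b : ZMod p}
    (hb : b ≠ 1) (hn : 0 < n) (h : b ^ n = 1) : ∃ q, q.Prime ∧ q ∣ n ∧ q < p := by
  have hb₀ : b ≠ 0 := by
    rintro rfl
    exact zero_ne_one (by rwa [zero_pow hn.ne'] at h)
  have hdvd_n : orderOf b ∣ n := orderOf_dvd_of_pow_eq_one h
  have hdvd_p : orderOf b ∣ p - 1 := ZMod.orderOf_dvd_card_sub_one hb₀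
  have hord : orderOf b ≠ 1 := fun h1 => hb (orderOf_eq_one_iff.mp h1)
  have hp := (Fact.out : p.Prime).two_le
  refine ⟨(orderOf b).minFac, Nat.minFac_prime hord, (Nat.minFac_dvd _).trans hdvd_n, ?_⟩
  have := Nat.le_of_dvd (by omega) ((Nat.minFac_dvd _).trans hdvd_p)
  omega

lemma Nat.exists_prime_dvd_lt_of_dvd_two_pow_sub_one {p n : ℕ} (hp : p.Prime) (hn : 0 < n)
    (h : p ∣ 2 ^ n - 1) : ∃ q, q.Prime ∧ q ∣ n ∧ q < p := by
  have := Fact.mk hp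
  refine ZMod.exists_prime_dvd_lt_of_pow_eq_one (b := 2) (fun h21 => ?_) hn ?_
  · exact one_ne_zero (by linear_combination h21 : (1 : ZMod p) = 0)
  · have h0 := (ZMod.natCast_eq_zero_iff _ _).mpr h
    rw [Nat.cast_sub Nat.one_le_two_pow] at h0
    push_cast at h0
    exact sub_eq_zero.mp h0

theorem eq_one_of_dvd_two_pow_sub_one {ι : Type*} (f : ι → ι) (a : ι → ℕ) (ha : ∀ i, 0 < a i)
    (h : ∀ i, a i ∣ 2 ^ a (f i) - 1) (i : ι) : a i = 1 := by
  have hprime : ∀ p, p.Prime → ∀ i, ¬ p ∣ a i := by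
    intro p
    induction p using Nat.strong_induction_on with
    | _ p ih =>
      intro hp i hpi
      obtain ⟨q, hq, hqa, hqp⟩ :=
        Nat.exists_prime_dvd_lt_of_dvd_two_pow_sub_one hp (ha (f i)) (hpi.trans (h i))
      exact ih q hqp hq (f i) hqa
  exact Nat.eq_one_iff_not_exists_prime_dvd.mpr fun p hp => hprime p hp i

section GroupTheory

variable {G : Type*} [Group G]

lemma inv_pow_mul_mul_pow_eq_pow_pow {x y : G} {n : ℕ} (h : y⁻¹ * x * y = x ^ n) (k : ℕ) :
    (y ^ k)⁻¹ * x * y ^ k = x ^ n ^ k := by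
  induction k with
  | zero => simp
  | succ k ih =>
    calc (y ^ (k + 1))⁻¹ * x * y ^ (k + 1) = y⁻¹ * ((y ^ k)⁻¹ * x * y ^ k) * y⁻¹⁻¹ := by group
      _ = (y⁻¹ * x * y) ^ n ^ k := by rw [ih, ← conj_pow, inv_inv]
      _ = x ^ n ^ (k + 1) := by rw [h, ← pow_mul, pow_succ']

lemma orderOf_dvd_pow_orderOf_sub_one {x y : G} {n : ℕ} (h : y⁻¹ * x * y = x ^ n) :
    orderOf x ∣ n ^ orderOf y - 1 := by
  have hfix : x ^ 1 = x ^ n ^ orderOf y := by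
    rw [← inv_pow_mul_mul_pow_eq_pow_pow h, pow_orderOf_eq_one]
    simp
  exact (pow_eq_pow_iff_modEq.mp hfix).dvd'

theorem eq_one_of_inv_mul_mul_eq_sq [Finite G] {ι : Type*} (f : ι → ι) (x : ι → G)
    (h : ∀ i, (x (f i))⁻¹ * x i * x (f i) = x i ^ 2) (i : ι) : x i = 1 :=
  orderOf_eq_one_iff.mp <| eq_one_of_dvd_two_pow_sub_one f (fun i => orderOf (x i))
    (fun i => orderOf_pos (x i)) (fun i => orderOf_dvd_pow_orderOf_sub_one (h i)) i

end GroupTheory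

lemma HigmanGroup.inv_mul_mul_eq_sq (i : Fin 4) :
    (PresentedGroup.of (i + 1) : HigmanGroup)⁻¹ * .of i * .of (i + 1) = .of i ^ 2 := by
  have hrel : (FreeGroup.of (i + 1))⁻¹ * FreeGroup.of i * FreeGroup.of (i + 1) *
      (FreeGroup.of i)⁻¹ * (FreeGroup.of i)⁻¹ ∈ higmanRels := by
    fin_cases i <;> simp [higmanRels]
  have h := PresentedGroup.one_of_mem hrel
  simp only [map_mul, map_inv] at h
  rw [← mul_inv_eq_one, pow_two, mul_inv_rev, ← mul_assoc]
  exact h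

/-- The Higman group has no nontrivial finite quotients: every
homomorphism from it to a finite group is trivial. -/
theorem stmt_19 : ∀ (F : Type u) [Group F] [Finite F] (φ : HigmanGroup →* F),
    φ = 1 := by
  intro F _ _ φ
  ext i
  refine eq_one_of_inv_mul_mul_eq_sq (· + 1) (fun i => φ (.of i)) (fun i => ?_) i
  simpa only [map_mul, map_inv, map_pow] using congrArg φ (HigmanGroup.inv_mul_mul_eq_sq i)
end
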